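/- arXiv:1901.06157 — 10 statements merged into one kernel-verified Lean document; each statement's English description precedes it below -/
import Mathlib

section
/- Let k ≥ 0 and n ≥ 1 be integers and let α be an integer with α^n ≡ 1 (mod n). Then Σ_{i=0}^{n-1} i^(k̲) · α^(i-k) ≡ 0 (mod n) (where, since i^(k̲) = 0 for i < k, the sum is the integer Σ_{i=k}^{n-1} i^(k̲) α^(i-k)) if and only if at least one of the following holds: (a) k+1 is neither 4 nor a prime; (b) k+1 = 4 and 4 ∤ n; (c) k+1 is a prime q, and either q ∤ n or α ≢ 1 (mod q). -/
/-!
The sum is `G⁽ᵏ⁾(α)` for `G = ∑_{i<n} X^i`, and `n` divides it iff every prime power `p^e ∥ n`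
does.

If `p ∤ α - 1`, differentiating `(X - 1) G = X^n - 1` gives
`(α - 1) G⁽ᵏ⁺¹⁾(α) = n^(k+1̲) α^(n-k-1) - (k + 1) G⁽ᵏ⁾(α)`, so `p^e ∣ G⁽ᵏ⁾(α)` by induction on `k`
(the case `k = 0` is the hypothesis `α^n ≡ 1`).

If `p ∣ α - 1`, the expansion `G(X + 1) = ∑_m C(n, m+1) X^m` shows that all terms but `m = k` of
`G⁽ᵏ⁾(α)` are divisible by `p^e`, so `G⁽ᵏ⁾(α) ≡ k! C(n, k+1) (mod p^e)`. Since
`(k + 1) · k! C(n, k+1) = n · (n-1)^(k̲)`, this is divisible by `p^e` iff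
`v_p(k + 1) ≤ v_p((n-1)^(k̲))`. That always holds if `k + 1 ≠ 4` is composite (then `k + 1 ∣ k!`);
for prime `k + 1` it fails exactly at `p = k + 1 ∣ n`, and for `k + 1 = 4` exactly at `p = 2` when
`4 ∣ n` (for even `n`, `α^n ≡ 1 (mod n)` forces `α` odd).
-/

open Finset Polynomial
open scoped Nat

theorem Nat.descFactorial_succ_eq_mul_pred (n k : ℕ) :
    n.descFactorial (k + 1) = n * (n - 1).descFactorial k := by
  cases n with
  | zero => simp
  | succ n => exact Nat.succ_descFactorial_succ n k

theorem Polynomial.iterate_derivative_comp_X_add_C {R : Type*} [CommRing R] (p : R[X]) (r : R)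
    (k : ℕ) : derivative^[k] (p.comp (X + C r)) = (derivative^[k] p).comp (X + C r) := by
  induction k generalizing p with
  | zero => rfl
  | succ k ih => simp [ih, derivative_comp]

section GeomSumDeriv

variable {R : Type*} [CommRing R]

def geomSumDeriv (k n : ℕ) (x : R) : R :=
  ∑ i ∈ range n, (i.descFactorial k : R) * x ^ (i - k)

theorem geomSumDeriv_eq_eval (k n : ℕ) (x : R) :
    geomSumDeriv k n x = (derivative^[k] (∑ i ∈ range n, (X : R[X]) ^ i)).eval x := by
  simp [geomSumDeriv, iterate_derivative_sum, iterate_derivative_X_pow_eq_smul, eval_finsetSum]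

theorem geomSumDeriv_add_one (k n : ℕ) (y : R) :
    geomSumDeriv k n (y + 1) =
      ∑ m ∈ range n, ((m.descFactorial k * n.choose (m + 1) : ℕ) : R) * y ^ (m - k) := by
  have h := congrArg (fun p => (derivative^[k] p).eval y)
    (geom_sum_X_comp_X_add_one_eq_sum (R := R) n)
  simp only [← C_1, iterate_derivative_comp_X_add_C, eval_comp] at h
  rw [geomSumDeriv_eq_eval]
  simpa [iterate_derivative_sum, iterate_derivative_natCast_mul, iterate_derivative_X_pow_eq_smul,
    eval_finsetSum, mul_comm, mul_left_comm, mul_assoc] using h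

theorem sub_one_mul_geomSumDeriv_zero (n : ℕ) (x : R) :
    (x - 1) * geomSumDeriv 0 n x = x ^ n - 1 := by
  simpa [geomSumDeriv] using mul_geom_sum x n

theorem sub_one_mul_geomSumDeriv_succ (k n : ℕ) (x : R) :
    (x - 1) * geomSumDeriv (k + 1) n x + (k + 1) * geomSumDeriv k n x =
      n.descFactorial (k + 1) * x ^ (n - (k + 1)) := by
  have h := congrArg (fun p => (derivative^[k + 1] p).eval x) (mul_geom_sum (X : R[X]) n)
  simp only [sub_mul, one_mul, mul_comm X, iterate_derivative_sub, iterate_derivative_mul_X,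
    iterate_derivative_X_pow_eq_smul, iterate_derivative_one k.succ_pos] at h
  simp only [eval_sub, eval_add, eval_mul, eval_smul, eval_X, eval_pow, eval_one,
    eval_natCast, nsmul_eq_mul, Nat.add_sub_cancel, Nat.cast_add, Nat.cast_one, sub_zero] at h
  rw [geomSumDeriv_eq_eval, geomSumDeriv_eq_eval]
  linear_combination h

theorem dvd_geomSumDeriv_of_isCoprime {n : ℕ} {x m : R} (hmn : m ∣ n) (hm : m ∣ x ^ n - 1)
    (hcop : IsCoprime m (x - 1)) (k : ℕ) : m ∣ geomSumDeriv k n x := by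
  induction k with
  | zero => exact hcop.dvd_of_dvd_mul_left (by rwa [sub_one_mul_geomSumDeriv_zero])
  | succ k ih =>
    refine hcop.dvd_of_dvd_mul_left ?_
    rw [eq_sub_of_add_eq (sub_one_mul_geomSumDeriv_succ k n x)]
    have hdesc : (n : R) ∣ n.descFactorial (k + 1) := by
      rw [Nat.descFactorial_succ_eq_mul_pred, Nat.cast_mul]
      exact dvd_mul_right _ _
    exact dvd_sub ((hmn.trans hdesc).mul_right _) (ih.mul_left _)

end GeomSumDeriv

theorem padicValNat_succ_le_padicValNat_factorial_add_one {p : ℕ} [hp : Fact p.Prime] (m : ℕ) :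
    padicValNat p (m + 1) ≤ padicValNat p m ! + 1 := by
  set a := padicValNat p (m + 1)
  obtain h | ha := Nat.eq_zero_or_pos a
  · omega
  have hle : p ^ (a - 1) * p ≤ m + 1 := by
    rw [← pow_succ, Nat.sub_add_cancel ha]
    exact Nat.le_of_dvd m.succ_pos pow_padicValNat_dvd
  have hm : p ^ (a - 1) ≤ m := by
    nlinarith [hp.out.two_le, Nat.one_le_pow (a - 1) p hp.out.pos]
  have := (padicValNat_dvd_iff_le m.factorial_ne_zero).mp
    (Nat.dvd_factorial (pow_pos hp.out.pos _) hm)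
  omega

theorem pow_dvd_descFactorial_mul_choose_mul_pow {p e n k m : ℕ} [Fact p.Prime]
    (hpe : p ^ e ∣ n) (hkm : k < m) :
    p ^ e ∣ m.descFactorial k * n.choose (m + 1) * p ^ (m - k) := by
  set N := m.descFactorial k * n.choose (m + 1)
  obtain hN | hN := eq_or_ne N 0
  · simp [hN]
  have hn : n ≠ 0 := by rintro rfl; simp [N] at hN
  have hC : (n - 1).choose m ≠ 0 := by
    refine (Nat.choose_pos ?_).ne'
    have : m + 1 ≤ n := by by_contra h; simp [N, Nat.choose_eq_zero_of_lt (not_le.mp h)] at hN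
    omega
  have hid : (m + 1) * ((m - k)! * N) = n * (m ! * (n - 1).choose m) := by
    have h2 := Nat.add_one_mul_choose_eq (n - 1) m
    rw [Nat.sub_add_cancel (Nat.one_le_iff_ne_zero.mpr hn)] at h2
    calc (m + 1) * ((m - k)! * N)
        = (m - k)! * m.descFactorial k * (n.choose (m + 1) * (m + 1)) := by ring
      _ = _ := by rw [← h2, Nat.factorial_mul_descFactorial hkm.le]; ring
  -- with `v_p(m+1) ≤ v_p(m!) + 1` and `v_p((m-k)!) < m - k`, `hid` gives `e ≤ v_p(N) + (m - k)`
  have hv := congrArg (padicValNat p) hid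
  rw [padicValNat.mul (by omega) (by positivity), padicValNat.mul (by positivity) hN,
    padicValNat.mul hn (by positivity), padicValNat.mul (by positivity) hC] at hv
  have h1 := padicValNat_succ_le_padicValNat_factorial_add_one (p := p) m
  have h2 := padicValNat_factorial_lt_of_ne_zero p (show m - k ≠ 0 by omega)
  have h3 : e ≤ padicValNat p n := (padicValNat_dvd_iff_le hn).mp hpe
  calc p ^ e ∣ p ^ (padicValNat p N + (m - k)) := pow_dvd_pow p (by omega)
    _ = p ^ padicValNat p N * p ^ (m - k) := pow_add ..
    _ ∣ N * p ^ (m - k) := mul_dvd_mul_right pow_padicValNat_dvd _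

theorem geomSumDeriv_modEq_factorial_mul_choose {p e n : ℕ} [Fact p.Prime] (hpe : p ^ e ∣ n)
    {α : ℤ} (hα : (p : ℤ) ∣ α - 1) (k : ℕ) :
    geomSumDeriv k n α ≡ ((k ! * n.choose (k + 1) : ℕ) : ℤ) [ZMOD (p : ℤ) ^ e] := by
  rw [← sub_add_cancel α 1, geomSumDeriv_add_one]
  convert Int.sum_modEq_single (a := k) _ _ using 1
  · simp [Nat.descFactorial_self]
  · intro hk
    rw [Nat.choose_eq_zero_of_lt (by simp at hk; omega)]
    simp
  · intro m _ hmk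
    rw [Int.modEq_zero_iff_dvd]
    obtain hm | hm := hmk.lt_or_gt
    · simp [Nat.descFactorial_eq_zero_iff_lt.mpr hm]
    calc (p : ℤ) ^ e ∣ ((m.descFactorial k * n.choose (m + 1) : ℕ) : ℤ) * (p : ℤ) ^ (m - k) := by
          exact_mod_cast pow_dvd_descFactorial_mul_choose_mul_pow hpe hm
      _ ∣ _ := mul_dvd_mul_left _ (pow_dvd_pow_of_dvd hα _)

theorem pow_padicValNat_dvd_iff_of_mul_eq_mul {p a b x y : ℕ} [Fact p.Prime] (ha : a ≠ 0)
    (hb : b ≠ 0) (h : a * x = b * y) :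
    p ^ padicValNat p b ∣ x ↔ p ^ padicValNat p a ∣ y := by
  obtain rfl | hx := eq_or_ne x 0
  · obtain rfl : y = 0 := by simpa [hb] using h.symm
    simp
  have hy : y ≠ 0 := by rintro rfl; simp [ha, hx] at h
  have hv := congrArg (padicValNat p) h
  rw [padicValNat.mul ha hx, padicValNat.mul hb hy] at hv
  rw [padicValNat_dvd_iff_le hx, padicValNat_dvd_iff_le hy]
  omega

theorem succ_mul_factorial_mul_choose_succ (n k : ℕ) :
    (k + 1) * (k ! * n.choose (k + 1)) = n * (n - 1).descFactorial k := by
  rw [← mul_assoc, ← Nat.factorial_succ, ← Nat.descFactorial_eq_factorial_mul_choose,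
    Nat.descFactorial_succ_eq_mul_pred]

theorem Int.natCast_dvd_iff_forall_prime_pow_factorization_dvd {n : ℕ} (hn : n ≠ 0) (a : ℤ) :
    (n : ℤ) ∣ a ↔ ∀ p : ℕ, p.Prime → (p : ℤ) ^ n.factorization p ∣ a := by
  refine ⟨fun h p _ => (Int.natCast_dvd_natCast.mpr (Nat.ordProj_dvd n p)).trans (by simpa using h),
    fun h => ?_⟩
  rw [Int.natCast_dvd, Nat.dvd_iff_prime_pow_dvd_dvd]
  intro p e hp hpe
  have hle : e ≤ n.factorization p := (hp.pow_dvd_iff_le_factorization hn).mp hpe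
  exact Int.natCast_dvd.mp (by simpa using (pow_dvd_pow (p : ℤ) hle).trans (h p hp))

theorem pow_factorization_dvd_geomSumDeriv_iff {p n : ℕ} [hp : Fact p.Prime] (hn : n ≠ 0)
    {α : ℤ} (hα : (n : ℤ) ∣ α ^ n - 1) (k : ℕ) :
    (p : ℤ) ^ n.factorization p ∣ geomSumDeriv k n α ↔
      ((p : ℤ) ∣ α - 1 → p ^ padicValNat p (k + 1) ∣ (n - 1).descFactorial k) := by
  have hpe : (p : ℤ) ^ n.factorization p ∣ n := by exact_mod_cast Nat.ordProj_dvd n p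
  by_cases hpα : (p : ℤ) ∣ α - 1
  · rw [(geomSumDeriv_modEq_factorial_mul_choose (Nat.ordProj_dvd n p) hpα k).dvd_iff,
      ← Int.natCast_pow, Int.natCast_dvd_natCast, Nat.factorization_def n hp.out,
      pow_padicValNat_dvd_iff_of_mul_eq_mul k.succ_ne_zero hn
        (succ_mul_factorial_mul_choose_succ n k)]
    exact ⟨fun h _ => h, fun h => h hpα⟩
  · have hcop : IsCoprime ((p : ℤ) ^ n.factorization p) (α - 1) :=
      ((Nat.prime_iff_prime_int.mp hp.out).coprime_iff_not_dvd.mpr hpα).pow_left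
    exact iff_of_true (dvd_geomSumDeriv_of_isCoprime hpe (hpe.trans hα) hcop k) (absurd · hpα)

theorem natCast_dvd_geomSumDeriv_iff {n : ℕ} (hn : n ≠ 0) {α : ℤ} (hα : (n : ℤ) ∣ α ^ n - 1)
    (k : ℕ) :
    (n : ℤ) ∣ geomSumDeriv k n α ↔ ∀ p : ℕ, p.Prime → p ∣ n → (p : ℤ) ∣ α - 1 →
      p ^ padicValNat p (k + 1) ∣ (n - 1).descFactorial k := by
  rw [Int.natCast_dvd_iff_forall_prime_pow_factorization_dvd hn]
  refine forall₂_congr fun p hp => ?_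
  have := Fact.mk hp
  by_cases hpn : p ∣ n
  · rw [pow_factorization_dvd_geomSumDeriv_iff hn hα, imp_iff_right hpn]
  · simp [Nat.factorization_eq_zero_of_not_dvd hpn, hpn]

theorem succ_dvd_factorial_of_not_prime {k : ℕ} (h4 : k + 1 ≠ 4) (hk : ¬ (k + 1).Prime) :
    k + 1 ∣ k ! := by
  obtain rfl | hk0 := eq_or_ne k 0
  · simp
  obtain ⟨a, ⟨b, hab⟩, ha, hak⟩ := Nat.exists_dvd_of_not_prime2 (by omega) hk
  have hb : 2 ≤ b := by
    by_contra! hb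
    interval_cases b <;> omega
  have hsum : a + b ≤ k := by
    rcases (show a = 2 ∨ 3 ≤ a by omega) with rfl | ha3
    · have : 3 ≤ b := by omega
      omega
    · nlinarith
  rw [hab]
  calc a * b ∣ a ! * b ! :=
        mul_dvd_mul (Nat.dvd_factorial (by omega) le_rfl) (Nat.dvd_factorial (by omega) le_rfl)
    _ ∣ (a + b)! := Nat.factorial_mul_factorial_dvd_factorial_add a b
    _ ∣ k ! := Nat.factorial_dvd_factorial hsum

theorem Nat.Prime.not_dvd_descFactorial_pred {q n k : ℕ} (hq : q.Prime) (hqn : q ∣ n)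
    (hn : n ≠ 0) (hk : k < q) : ¬ q ∣ (n - 1).descFactorial k := by
  rw [Nat.descFactorial_eq_prod_range, hq.prime.dvd_finsetProd_iff]
  rintro ⟨i, hi, hqi⟩
  have hqn' := Nat.le_of_dvd (Nat.pos_of_ne_zero hn) hqn
  have hi' := Finset.mem_range.mp hi
  have : q ∣ i + 1 := by
    have := Nat.dvd_sub hqn hqi
    rwa [show n - (n - 1 - i) = i + 1 by omega] at this
  have := Nat.le_of_dvd i.succ_pos this
  omega

theorem four_dvd_descFactorial_three_iff {n : ℕ} (hn : n ≠ 0) (h2 : 2 ∣ n) :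
    4 ∣ (n - 1).descFactorial 3 ↔ ¬ 4 ∣ n := by
  have hD : (n - 1).descFactorial 3 = (n - 2) * ((n - 3) * (n - 1)) := by
    simp only [Nat.descFactorial_succ, Nat.descFactorial_zero, Nat.sub_sub]
    ring
  rw [hD]
  refine ⟨fun h h4 => ?_, fun h4 => (show 4 ∣ n - 2 by omega).mul_right _⟩
  have hodd : Odd ((n - 3) * (n - 1)) := Nat.odd_mul.mpr ⟨Nat.odd_iff.mpr (by omega),
    Nat.odd_iff.mpr (by omega)⟩
  have hcop : Nat.Coprime (2 ^ 2) ((n - 3) * (n - 1)) := (Nat.coprime_two_left.mpr hodd).pow_left 2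
  have := hcop.dvd_of_dvd_mul_right h
  omega

theorem Int.two_dvd_sub_one_of_two_dvd_pow_sub_one {α : ℤ} {n : ℕ} (hn : n ≠ 0)
    (h : 2 ∣ α ^ n - 1) : 2 ∣ α - 1 := by
  rw [← even_iff_two_dvd, Int.even_sub_one] at h ⊢
  rwa [Int.even_pow' hn] at h

theorem forall_pow_padicValNat_dvd_descFactorial_iff_of_prime {n k : ℕ} (P : ℕ → Prop)
    (hq : (k + 1).Prime) (hn : n ≠ 0) :
    (∀ p : ℕ, p.Prime → p ∣ n → P p → p ^ padicValNat p (k + 1) ∣ (n - 1).descFactorial k) ↔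
      ¬ (k + 1 ∣ n ∧ P (k + 1)) := by
  refine ⟨fun h ⟨hqn, hP⟩ => ?_, fun h p hp hpn hP => ?_⟩
  · have := h _ hq hqn hP
    rw [padicValNat.self hq.one_lt, pow_one] at this
    exact hq.not_dvd_descFactorial_pred hqn hn k.lt_succ_self this
  · have hpq : p ≠ k + 1 := by rintro rfl; exact h ⟨hpn, hP⟩
    have : ¬ p ∣ k + 1 := fun hp' => hpq ((Nat.prime_dvd_prime_iff_eq hp hq).mp hp')
    simp [padicValNat.eq_zero_of_not_dvd this]

theorem forall_pow_padicValNat_dvd_descFactorial_three_iff {n : ℕ} (P : ℕ → Prop) (hn : n ≠ 0) :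
    (∀ p : ℕ, p.Prime → p ∣ n → P p → p ^ padicValNat p 4 ∣ (n - 1).descFactorial 3) ↔
      ¬ (4 ∣ n ∧ P 2) := by
  have hv : padicValNat 2 4 = 2 := by
    rw [show (4 : ℕ) = 2 ^ 2 by norm_num, padicValNat.prime_pow]
  refine ⟨fun h ⟨h4n, hP⟩ => ?_, fun h p hp hpn hP => ?_⟩
  · have h2n : 2 ∣ n := (by norm_num : 2 ∣ 4).trans h4n
    have := h 2 Nat.prime_two h2n hP
    rw [hv] at this
    exact (four_dvd_descFactorial_three_iff hn h2n).mp this h4n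
  · obtain rfl | hp2 := eq_or_ne p 2
    · rw [hv]
      exact (four_dvd_descFactorial_three_iff hn hpn).mpr fun h4n => h ⟨h4n, hP⟩
    · have hp4 : ¬ p ∣ 4 := fun hp4 =>
        hp2 ((Nat.prime_dvd_prime_iff_eq hp Nat.prime_two).mp (hp.dvd_of_dvd_pow (n := 2) hp4))
      simp [padicValNat.eq_zero_of_not_dvd hp4]

/-- **Theorem 1.** Suppose `k ≥ 0`, `n ≥ 1`, `α ∈ ℤ` with `α ^ n ≡ 1 (mod n)`.
Then `∑_{i=0}^{n-1} i^(k̲) · α^(i-k) ≡ 0 (mod n)` (where `i^(k̲)` is the falling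
factorial, which vanishes for `i < k`, so each term is an integer) if and only if
(a) `k+1` is neither `4` nor a prime, or (b) `k+1 = 4` and `4 ∤ n`, or
(c) `k+1` is a prime `q` and either `q ∤ n` or `α ≢ 1 (mod q)`. -/
theorem sum_descFactorial_mul_pow_modEq_zero_iff
    (k n : ℕ) (hn : 1 ≤ n) (α : ℤ) (hα : α ^ n ≡ 1 [ZMOD (n : ℤ)]) :
    (∑ i ∈ Finset.range n, (i.descFactorial k : ℤ) * α ^ (i - k)) ≡ 0 [ZMOD (n : ℤ)] ↔
      (k + 1 ≠ 4 ∧ ¬ Nat.Prime (k + 1)) ∨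
      (k + 1 = 4 ∧ ¬ (4 ∣ n)) ∨
      (Nat.Prime (k + 1) ∧ (¬ ((k + 1) ∣ n) ∨ ¬ (α ≡ 1 [ZMOD ((k : ℤ) + 1)]))) := by
  have hn0 : n ≠ 0 := by omega
  have hαn : (n : ℤ) ∣ α ^ n - 1 := hα.symm.dvd
  rw [Int.modEq_zero_iff_dvd, ← geomSumDeriv, natCast_dvd_geomSumDeriv_iff hn0 hαn]
  by_cases h4 : k + 1 = 4
  · obtain rfl : k = 3 := by omega
    rw [forall_pow_padicValNat_dvd_descFactorial_three_iff _ hn0]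
    have h2α : 2 ∣ n → (2 : ℤ) ∣ α - 1 := fun h2n =>
      Int.two_dvd_sub_one_of_two_dvd_pow_sub_one hn0 ((Int.natCast_dvd_natCast.mpr h2n).trans hαn)
    have h4p : ¬ (3 + 1).Prime := by norm_num
    simp only [h4p, Nat.cast_ofNat, ne_eq, not_true_eq_false, false_and, true_and, false_or,
      or_false]
    exact ⟨fun h h4n => h ⟨h4n, h2α ((by norm_num : 2 ∣ 4).trans h4n)⟩, fun h h' => h h'.1⟩
  by_cases hq : (k + 1).Prime
  · rw [forall_pow_padicValNat_dvd_descFactorial_iff_of_prime _ hq hn0, Int.modEq_comm,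
      Int.modEq_iff_dvd]
    simp only [h4, hq, Nat.cast_add, Nat.cast_one, ne_eq, not_false_eq_true, not_true_eq_false,
      and_false, false_and, true_and, false_or]
    exact not_and_or
  · simp only [h4, hq, not_false_eq_true, and_true, true_or, iff_true, ne_eq]
    exact fun p _ _ _ => pow_padicValNat_dvd.trans
      ((succ_dvd_factorial_of_not_prime h4 hq).trans (Nat.factorial_dvd_descFactorial _ _))
end

section
/- Let k ≥ 0 and n ≥ 1 be integers and let α be an integer with α^n ≡ 1 (mod n). If at least one of the following holds: (a) k+1 is neither 4 nor a prime; (b) k+1 = 4 and 4 ∤ n; (c) k+1 is a prime q and either q ∤ n or α ≢ 1 (mod q); then Σ_{i=k}^{n-1} i^(k̲) · α^(i-k) ≡ 0 (mod n). -/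
/-!
Write `β = α - 1` and `G = ∑_{j<n} C(n, j+1) X^j`, so that `G(x - 1) = ∑_{i<n} x^i` and
`X * G = (X + 1)^n - 1`. The sum is `G⁽ᵏ⁾(β)`, and it suffices to show `p^t ∣ G⁽ᵏ⁾(β)` whenever
`p^t ∣ n`.

If `p ∤ β`: differentiating `X * G = (X + 1)^n - 1` gives
`β G⁽ᵏ⁺¹⁾(β) + (k+1) G⁽ᵏ⁾(β) ≡ 0 (mod n)`, hence `n ∣ β^(k+1) G⁽ᵏ⁾(β)` by induction, and `β` is a
unit mod `p`.

If `p ∣ β`: `G⁽ᵏ⁾(β) = ∑_j C(n, j+1) j^(k̲) β^(j-k)`. As `(j+1) C(n, j+1) = n C(n-1, j)`, the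
binomial coefficient lacks at most the `p`-part of `j + 1`, which for `j > k` is covered by
`j^(k̲) p^(j-k)`. Only the term `C(n, k+1) k!` remains, and (a)–(c) are what make it divisible
by `p^t`: a composite `k + 1 ≠ 4` divides `k!`.
-/

open Finset Polynomial
open scoped Nat

namespace Polynomial

variable {R : Type*} [CommRing R]

theorem iterate_derivative_comp_X_add_C_s1 (p : R[X]) (c : R) (k : ℕ) :
    derivative^[k] (p.comp (X + C c)) = (derivative^[k] p).comp (X + C c) := by
  induction k generalizing p with
  | zero => rfl
  | succ k ih => simp [ih, derivative_comp]

theorem eval_iterate_derivative_geom_sum_X (x : R) (n k : ℕ) :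
    eval x (derivative^[k] (∑ i ∈ range n, (X : R[X]) ^ i)) =
      ∑ i ∈ Ico k n, (i.descFactorial k : R) * x ^ (i - k) := by
  simp only [iterate_derivative_sum, iterate_derivative_X_pow_eq_natCast_mul, eval_finsetSum,
    eval_mul, eval_natCast, eval_pow, eval_X]
  refine (sum_subset (fun i hi ↦ mem_range.mpr (mem_Ico.mp hi).2) fun i hi hik ↦ ?_).symm
  have : i < k := by simp_all
  simp [Nat.descFactorial_eq_zero_iff_lt.mpr this]

theorem eval_iterate_derivative_sum_natCast_mul_X_pow (s : Finset ℕ) (a : ℕ → ℕ) (x : R)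
    (k : ℕ) :
    eval x (derivative^[k] (∑ i ∈ s, (a i : R[X]) * X ^ i)) =
      ∑ i ∈ s, (a i : R) * i.descFactorial k * x ^ (i - k) := by
  simp [iterate_derivative_sum, iterate_derivative_natCast_mul,
    iterate_derivative_X_pow_eq_natCast_mul, eval_finsetSum, mul_assoc]

theorem sum_Ico_descFactorial_mul_pow_eq_eval (x : R) (n k : ℕ) :
    ∑ i ∈ Ico k n, (i.descFactorial k : R) * x ^ (i - k) =
      eval (x - 1) (derivative^[k] (∑ i ∈ range n, (n.choose (i + 1) : R[X]) * X ^ i)) := by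
  rw [← geom_sum_X_comp_X_add_one_eq_sum, ← C_1, iterate_derivative_comp_X_add_C_s1, eval_comp]
  simp [eval_iterate_derivative_geom_sum_X]

theorem sum_choose_succ_mul_X_pow_mul_X (n : ℕ) :
    (∑ i ∈ range n, (n.choose (i + 1) : R[X]) * X ^ i) * X = (X + 1) ^ n - 1 := by
  have h := congrArg (comp · (X + 1)) (geom_sum_mul (X : R[X]) n)
  simp only [mul_comp, sub_comp, X_comp, one_comp, X_pow_comp, add_sub_cancel_right] at h
  rwa [geom_sum_X_comp_X_add_one_eq_sum] at h

theorem dvd_pow_mul_eval_iterate_derivative {n : ℕ} {G : R[X]} {x : R}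
    (hG : G * X = (X + 1) ^ n - 1) (hx : (n : R) ∣ (x + 1) ^ n - 1) (k : ℕ) :
    (n : R) ∣ x ^ (k + 1) * eval x (derivative^[k] G) := by
  have hrec (k : ℕ) : x * eval x (derivative^[k + 1] G) + (k + 1) * eval x (derivative^[k] G) =
      eval x (derivative^[k + 1] ((X + 1) ^ n)) := by
    have := congrArg (fun q ↦ eval x (derivative^[k + 1] q)) hG
    rw [iterate_derivative_mul_X, iterate_derivative_sub, iterate_derivative_one k.succ_pos,
      sub_zero, nsmul_eq_mul] at this
    simpa [mul_comm] using this
  induction k with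
  | zero =>
    have := congrArg (eval x) hG
    simp only [eval_mul, eval_X, eval_sub, eval_pow, eval_add, eval_one] at this
    rwa [Function.iterate_zero_apply, pow_one, mul_comm, this]
  | succ k ih =>
    have hn : (n : R) ∣ eval x (derivative^[k + 1] ((X + 1) ^ n)) :=
      dvd_iterate_derivative_pow _ n x k.succ_ne_zero
    have : x ^ (k + 2) * eval x (derivative^[k + 1] G) =
        x ^ (k + 1) * eval x (derivative^[k + 1] ((X + 1) ^ n)) -
          (k + 1) * (x ^ (k + 1) * eval x (derivative^[k] G)) := by
      linear_combination x ^ (k + 1) * hrec k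
    rw [this]
    exact dvd_sub (dvd_mul_of_dvd_right hn _) (dvd_mul_of_dvd_right ih _)

end Polynomial

namespace Nat

theorem pow_dvd_mul_of_ordProj_dvd {p t a b c : ℕ} (hp : p.Prime) (ha : a ≠ 0)
    (h : p ^ t ∣ a * b) (hc : ordProj[p] a ∣ c) : p ^ t ∣ b * c := by
  rw [← ordProj_mul_ordCompl_eq_self a p, mul_right_comm] at h
  have hcop : Coprime (p ^ t) (ordCompl[p] a) := (coprime_ordCompl hp ha).pow_left t
  rw [mul_comm]
  exact (hcop.dvd_of_dvd_mul_right h).trans (mul_dvd_mul_right hc b)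

theorem pow_dvd_choose_succ_mul {p t n j c : ℕ} (hp : p.Prime) (hn : p ^ t ∣ n)
    (hc : ordProj[p] (j + 1) ∣ c) : p ^ t ∣ n.choose (j + 1) * c := by
  obtain _ | m := n
  · simp
  refine pow_dvd_mul_of_ordProj_dvd hp j.succ_ne_zero (hn.trans ⟨m.choose j, ?_⟩) hc
  rw [add_one_mul_choose_eq, mul_comm]

/-- `v_p(j + 1) ≤ v_p(j!) + 1` since `p ^ (v_p(j + 1) - 1) ≤ j`, and `v_p((j - k)!) < j - k`. -/
theorem ordProj_succ_dvd_descFactorial_mul_pow {p j k : ℕ} (hp : p.Prime) (hkj : k < j) :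
    ordProj[p] (j + 1) ∣ j.descFactorial k * p ^ (j - k) := by
  have := Fact.mk hp
  rw [factorization_def _ hp]
  set s := padicValNat p (j + 1)
  have hjk : j.descFactorial k ≠ 0 := (descFactorial_pos.mpr hkj.le).ne'
  have hs : s ≤ padicValNat p j ! + 1 := by
    rcases s.eq_zero_or_pos with hs0 | hs0
    · omega
    have hps : p ^ s ≤ j + 1 := le_of_dvd j.succ_pos pow_padicValNat_dvd
    have : p ^ (s - 1) ∣ j ! := dvd_factorial (pow_pos hp.pos _)
      (by have := pow_lt_pow_right₀ hp.one_lt (s.sub_one_lt hs0.ne'); omega)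
    have := (padicValNat_dvd_iff_le (factorial_ne_zero j)).mp this
    omega
  have hfac : padicValNat p j ! =
      padicValNat p (j - k)! + padicValNat p (j.descFactorial k) := by
    rw [← factorial_mul_descFactorial hkj.le, padicValNat.mul (factorial_ne_zero _) hjk]
  have hlt := padicValNat_factorial_lt_of_ne_zero p (Nat.sub_ne_zero_of_lt hkj)
  rw [padicValNat_dvd_iff_le (mul_ne_zero hjk (pow_ne_zero _ hp.ne_zero)),
    padicValNat.mul hjk (pow_ne_zero _ hp.ne_zero), padicValNat.prime_pow]
  omega

theorem mul_dvd_factorial {a b n : ℕ} (ha : 0 < a) (hab : a < b) (hbn : b ≤ n) :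
    a * b ∣ n ! := by
  have : a * b ∣ b ! := by
    rw [← mul_factorial_pred (ha.trans hab).ne', mul_comm]
    exact mul_dvd_mul_left b (dvd_factorial ha (by omega))
  exact this.trans (factorial_dvd_factorial hbn)

theorem succ_dvd_factorial {k : ℕ} (h4 : k + 1 ≠ 4) (hk : ¬ (k + 1).Prime) : k + 1 ∣ k ! := by
  obtain rfl | hk0 := k.eq_zero_or_pos
  · simp
  set q := (k + 1).minFac
  have hq : 2 ≤ q := (minFac_prime (by omega)).two_le
  have hsq : q ^ 2 ≤ k + 1 := minFac_sq_le_self k.succ_pos hk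
  obtain ⟨m, hm⟩ := minFac_dvd (k + 1)
  have hqm : q ≤ m := by nlinarith
  rcases hqm.lt_or_eq with hqm | rfl
  · rw [hm]
    exact mul_dvd_factorial (by omega) hqm (by nlinarith)
  · have hq3 : 3 ≤ q := by
      rcases hq.lt_or_eq with h | h
      · omega
      · rw [← h] at hm; omega
    rw [hm]
    exact (mul_dvd_mul_left q (dvd_mul_left q 2)).trans
      (mul_dvd_factorial (by omega) (by omega) (by nlinarith))

end Nat

theorem prime_pow_dvd_eval_iterate_derivative_sum_choose_succ {p t n k : ℕ} {β : ℤ}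
    (hp : p.Prime) (hn : p ^ t ∣ n) (hβ : (p : ℤ) ∣ β) (hk : p ^ t ∣ n.choose (k + 1) * k !) :
    (p : ℤ) ^ t ∣
      eval β (derivative^[k] (∑ i ∈ range n, (n.choose (i + 1) : ℤ[X]) * X ^ i)) := by
  rw [eval_iterate_derivative_sum_natCast_mul_X_pow]
  refine dvd_sum fun j _ ↦ ?_
  obtain ⟨γ, rfl⟩ := hβ
  have hj : p ^ t ∣ n.choose (j + 1) * (j.descFactorial k * p ^ (j - k)) := by
    rcases lt_trichotomy j k with hjk | rfl | hjk
    · simp [Nat.descFactorial_eq_zero_iff_lt.mpr hjk]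
    · simpa [Nat.descFactorial_self] using hk
    · exact Nat.pow_dvd_choose_succ_mul hp hn (Nat.ordProj_succ_dvd_descFactorial_mul_pow hp hjk)
  have hj' := Int.natCast_dvd_natCast.mpr hj
  push_cast at hj'
  rw [mul_pow, ← mul_assoc, mul_assoc _ _ ((p : ℤ) ^ _)]
  exact dvd_mul_of_dvd_left hj' _

theorem pow_dvd_choose_succ_mul_factorial {p t n k : ℕ} {α : ℤ} (hp : p.Prime) (ht : p ^ t ∣ n)
    (hα : (p : ℤ) ∣ α - 1)
    (h : (k + 1 ≠ 4 ∧ ¬ Nat.Prime (k + 1)) ∨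
         (k + 1 = 4 ∧ ¬ (4 ∣ n)) ∨
         (Nat.Prime (k + 1) ∧ (¬ ((k + 1) ∣ n) ∨ ¬ (α ≡ 1 [ZMOD ((k : ℤ) + 1)])))) :
    p ^ t ∣ n.choose (k + 1) * k ! := by
  by_cases hpk : p ∣ k + 1
  swap
  · refine Nat.pow_dvd_choose_succ_mul hp ht ?_
    simp [Nat.factorization_eq_zero_of_not_dvd hpk]
  obtain rfl | ht0 := t.eq_zero_or_pos
  · simp
  have hpn : p ∣ n := (dvd_pow_self p ht0.ne').trans ht
  rcases h with ⟨h4, hk⟩ | ⟨h4, hn4⟩ | ⟨hq, hq'⟩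
  · exact Nat.pow_dvd_choose_succ_mul hp ht
      ((Nat.ordProj_dvd _ _).trans (Nat.succ_dvd_factorial h4 hk))
  · -- here `ordProj[2] 4 = 4 ∤ 3!`, but `t ≤ 1`
    obtain rfl : p = 2 := (Nat.prime_dvd_prime_iff_eq hp Nat.prime_two).mp
      (hp.dvd_of_dvd_pow (n := 2) (by simpa [h4] using hpk))
    have ht1 : t ≤ 1 := by
      by_contra! ht1
      exact hn4 ((pow_dvd_pow 2 ht1).trans ht)
    obtain rfl : k = 3 := by omega
    exact dvd_mul_of_dvd_right ((pow_dvd_pow 2 ht1).trans (by decide)) _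
  · obtain rfl := (Nat.prime_dvd_prime_iff_eq hp hq).mp hpk
    rcases hq' with hq' | hq'
    · exact absurd hpn hq'
    · exact absurd (Int.modEq_iff_dvd.mpr (by exact_mod_cast hα)).symm hq'

theorem sum_descFactorial_mul_pow_modEq_zero_general
    (k n : ℕ) (α : ℤ) (hα : α ^ n ≡ 1 [ZMOD (n : ℤ)])
    (h : (k + 1 ≠ 4 ∧ ¬ Nat.Prime (k + 1)) ∨
         (k + 1 = 4 ∧ ¬ (4 ∣ n)) ∨
         (Nat.Prime (k + 1) ∧ (¬ ((k + 1) ∣ n) ∨ ¬ (α ≡ 1 [ZMOD ((k : ℤ) + 1)])))) :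
    (∑ i ∈ Finset.Ico k n, (i.descFactorial k : ℤ) * α ^ (i - k)) ≡ 0 [ZMOD (n : ℤ)] := by
  rw [Int.modEq_zero_iff_dvd, sum_Ico_descFactorial_mul_pow_eq_eval, Int.natCast_dvd,
    Nat.dvd_iff_prime_pow_dvd_dvd]
  intro p t hp ht
  rw [← Int.natCast_dvd, Nat.cast_pow]
  by_cases hpα : (p : ℤ) ∣ α - 1
  · exact prime_pow_dvd_eval_iterate_derivative_sum_choose_succ hp ht hpα
      (pow_dvd_choose_succ_mul_factorial hp ht hpα h)
  · have hcop : IsCoprime ((p : ℤ) ^ t) ((α - 1) ^ (k + 1)) :=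
      (((Nat.prime_iff_prime_int.mp hp).coprime_iff_not_dvd).mpr hpα).pow
    have hn : (n : ℤ) ∣ (α - 1 + 1) ^ n - 1 := by simpa using hα.symm.dvd
    exact hcop.dvd_of_dvd_mul_left ((Int.natCast_dvd_natCast.mpr ht).trans
      (dvd_pow_mul_eval_iterate_derivative (sum_choose_succ_mul_X_pow_mul_X n) hn k))

/-- The "if" direction of Theorem 1: for `k ≥ 0`, `n ≥ 1` and `α ∈ ℤ` with
`α ^ n ≡ 1 (mod n)`, if (a) `k+1` is neither `4` nor a prime, or
(b) `k+1 = 4` and `4 ∤ n`, or (c) `k+1` is a prime `q` and either `q ∤ n` or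
`α ≢ 1 (mod q)`, then `∑_{i=k}^{n-1} i^(k̲) · α^(i-k) ≡ 0 (mod n)`. -/
theorem sum_descFactorial_mul_pow_modEq_zero
    (k n : ℕ) (hn : 1 ≤ n) (α : ℤ) (hα : α ^ n ≡ 1 [ZMOD (n : ℤ)])
    (h : (k + 1 ≠ 4 ∧ ¬ Nat.Prime (k + 1)) ∨
         (k + 1 = 4 ∧ ¬ (4 ∣ n)) ∨
         (Nat.Prime (k + 1) ∧ (¬ ((k + 1) ∣ n) ∨ ¬ (α ≡ 1 [ZMOD ((k : ℤ) + 1)])))) :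
    (∑ i ∈ Finset.Ico k n, (i.descFactorial k : ℤ) * α ^ (i - k)) ≡ 0 [ZMOD (n : ℤ)] :=
  sum_descFactorial_mul_pow_modEq_zero_general k n α hα h
end

section
/- Let n ≥ 1 be an integer with 4 ∣ n, and let α be an integer with α^n ≡ 1 (mod n). Then Σ_{i=3}^{n-1} i^(3̲) · α^(i-3) ≢ 0 (mod n). -/
/-!
Let `S_N(a) = ∑_{i<N} i^(3̲) a^i`, so that `S_n(α)` is `α³` times the sum in the theorem. For odd
`a` and odd `t` one shows `S_{2^k t}(a) ≡ 2^(k-1) (mod 2^k)` for all `k ≥ 2`, by induction on `k`.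

For `k = 2`: `2 ∣ i^(3̲)` and `2 ∣ a^i - 1` reduce `S_{4t}(a)` modulo 4 to
`∑_{i<4t} i^(3̲) = (4t)^(4̲) / 4 ≡ 2t`. For the step `m ↦ 2m` with `m = 2^k t`,
`S_{2m} - 2 S_m = a^m ∑_{i<m} ((m+i)^(3̲) - i^(3̲)) a^i + (a^m - 1) S_m`; modulo `2^(k+1)` the first
sum vanishes, being `m` times an even number plus a multiple of `m²`, and the second term vanishes
because `2^(k+1) ∣ a^(2^(k-1)) - 1` for odd `a`. So `S_{2m} ≡ 2 S_m ≡ 2^k (mod 2^(k+1))`.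

Writing `n = 2^k t`, `α` is odd since `α^n ≡ 1` modulo the even number `n`, so `n` cannot divide
`S_n(α)`.
-/

open Finset

theorem Nat.cast_descFactorial_three {S : Type*} [CommRing S] (a : ℕ) :
    (a.descFactorial 3 : S) = a * (a - 1) * (a - 2) := by
  rw [← descPochhammer_eval_eq_descFactorial]
  simp [descPochhammer_succ_right]

theorem Nat.cast_descFactorial_four {S : Type*} [CommRing S] (a : ℕ) :
    (a.descFactorial 4 : S) = a * (a - 1) * (a - 2) * (a - 3) := by
  rw [← descPochhammer_eval_eq_descFactorial]
  simp [descPochhammer_succ_right]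

theorem Nat.sum_range_descFactorial_mul (n k : ℕ) :
    (∑ i ∈ range n, i.descFactorial k) * (k + 1) = n.descFactorial (k + 1) := by
  induction n with
  | zero => simp
  | succ n ih =>
    rw [sum_range_succ, add_mul, ih, Nat.succ_descFactorial_succ, Nat.descFactorial_succ]
    rcases lt_or_ge n k with h | h
    · simp [Nat.descFactorial_eq_zero_iff_lt.mpr h]
    · rw [mul_comm _ (k + 1), ← add_mul]
      congr 1
      omega

theorem Int.two_pow_add_three_dvd_pow_two_pow_sub_one {a : ℤ} (ha : Odd a) (k : ℕ) :
    2 ^ (k + 3) ∣ a ^ 2 ^ (k + 1) - 1 := by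
  induction k with
  | zero => simpa using Int.eight_dvd_sq_sub_one_of_odd ha
  | succ k ih =>
    have hfactor : a ^ 2 ^ (k + 2) - 1 = (a ^ 2 ^ (k + 1) - 1) * (a ^ 2 ^ (k + 1) + 1) := by
      ring
    rw [hfactor, pow_succ]
    exact mul_dvd_mul ih (ha.pow.add_one).two_dvd

theorem even_sum_range_three_mul_sq_sub_six_mul_add_two_mul_pow {a : ℤ} (ha : Odd a)
    {m : ℕ} (hm : 4 ∣ m) : Even (∑ i ∈ range m, (3 * (i : ℤ) ^ 2 - 6 * i + 2) * a ^ i) := by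
  have hgauss : Even (∑ i ∈ range m, i) := by
    obtain ⟨j, rfl⟩ := hm
    refine ⟨j * (4 * j - 1), ?_⟩
    have := sum_range_id_mul_two (4 * j)
    rw [show 4 * j * (4 * j - 1) = j * (4 * j - 1) * 2 * 2 by ring] at this
    omega
  rw [← ZMod.natCast_eq_zero_iff_even] at hgauss
  rw [← ZMod.intCast_eq_zero_iff_even]
  have h2 : (2 : ZMod 2) = 0 := rfl
  have h3 : (3 : ZMod 2) = 1 := rfl
  have h6 : (6 : ZMod 2) = 0 := rfl
  push_cast at hgauss ⊢
  simpa only [ZMod.intCast_eq_one_iff_odd.mpr ha, one_pow, mul_one, ZMod.pow_card, h2, h3, h6,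
    one_mul, zero_mul, sub_zero, add_zero] using hgauss

def descFactorialPowSum (a : ℤ) (N : ℕ) : ℤ :=
  ∑ i ∈ range N, (i.descFactorial 3 : ℤ) * a ^ i

theorem descFactorialPowSum_two_mul_sub (a : ℤ) (m : ℕ) :
    descFactorialPowSum a (2 * m) - 2 * descFactorialPowSum a m =
      a ^ m * ((m : ℤ) * ∑ i ∈ range m, (3 * (i : ℤ) ^ 2 - 6 * i + 2) * a ^ i
        + (m : ℤ) ^ 2 * ∑ i ∈ range m, (3 * (i : ℤ) - 3 + m) * a ^ i)
      + (a ^ m - 1) * descFactorialPowSum a m := by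
  have hshift : ∑ i ∈ range m, ((m + i).descFactorial 3 : ℤ) * a ^ (m + i) =
      a ^ m * ((m : ℤ) * ∑ i ∈ range m, (3 * (i : ℤ) ^ 2 - 6 * i + 2) * a ^ i
        + (m : ℤ) ^ 2 * ∑ i ∈ range m, (3 * (i : ℤ) - 3 + m) * a ^ i)
      + a ^ m * descFactorialPowSum a m := by
    simp only [descFactorialPowSum, mul_sum, ← sum_add_distrib]
    refine sum_congr rfl fun i _ => ?_
    push_cast [Nat.cast_descFactorial_three]
    ring
  rw [descFactorialPowSum, two_mul m, sum_range_add, hshift, ← descFactorialPowSum]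
  ring

theorem dvd_descFactorialPowSum_two_mul_sub {a d : ℤ} {m : ℕ} (ha : Odd a) (hm : 4 ∣ m)
    (hdm : d ∣ 2 * m) (hda : d ∣ a ^ m - 1) :
    d ∣ descFactorialPowSum a (2 * m) - 2 * descFactorialPowSum a m := by
  obtain ⟨e, he⟩ := even_sum_range_three_mul_sq_sub_six_mul_add_two_mul_pow ha hm
  have hdm_sq : d ∣ (m : ℤ) ^ 2 := by
    obtain ⟨j, rfl⟩ := hm
    exact hdm.trans ⟨2 * j, by push_cast; ring⟩
  rw [descFactorialPowSum_two_mul_sub, he, ← two_mul, ← mul_assoc, mul_comm (m : ℤ)]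
  exact dvd_add (dvd_mul_of_dvd_right (dvd_add (dvd_mul_of_dvd_left hdm _)
    (dvd_mul_of_dvd_left hdm_sq _)) _) (dvd_mul_of_dvd_left hda _)

theorem four_dvd_descFactorialPowSum_four_mul_sub {a : ℤ} (ha : Odd a) (t : ℕ) :
    4 ∣ descFactorialPowSum a (4 * t) - 2 * t := by
  have hterm (i : ℕ) : (4 : ℤ) ∣ (i.descFactorial 3 : ℤ) * a ^ i - i.descFactorial 3 := by
    have h6 : (6 : ℤ) ∣ i.descFactorial 3 := mod_cast Nat.factorial_dvd_descFactorial i 3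
    rw [← mul_sub_one, show (4 : ℤ) = 2 * 2 by norm_num]
    exact mul_dvd_mul (dvd_trans (by norm_num) h6) (ha.pow.sub_odd odd_one).two_dvd
  have hsum : (∑ i ∈ range (4 * t), (i.descFactorial 3 : ℤ)) * 4 =
      4 * t * (4 * t - 1) * (4 * t - 2) * (4 * t - 3) := by
    have h : ((∑ i ∈ range (4 * t), i.descFactorial 3) * 4 : ℕ) = ((4 * t).descFactorial 4 : ℤ) :=
      congrArg _ (Nat.sum_range_descFactorial_mul (4 * t) 3)
    push_cast [Nat.cast_descFactorial_four] at h
    exact h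
  have hclosed : (∑ i ∈ range (4 * t), (i.descFactorial 3 : ℤ)) - 2 * t =
      4 * (16 * t ^ 4 - 24 * t ^ 3 + 11 * t ^ 2 - 2 * t) := by
    linarith
  have hsplit : descFactorialPowSum a (4 * t) - 2 * t =
      ∑ i ∈ range (4 * t), ((i.descFactorial 3 : ℤ) * a ^ i - i.descFactorial 3)
        + ((∑ i ∈ range (4 * t), (i.descFactorial 3 : ℤ)) - 2 * t) := by
    rw [descFactorialPowSum, sum_sub_distrib]
    ring
  rw [hsplit, hclosed]
  exact dvd_add (dvd_sum fun i _ => hterm i) (dvd_mul_right 4 _)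

theorem two_pow_dvd_descFactorialPowSum_sub {a : ℤ} (ha : Odd a) {t : ℕ} (ht : Odd t) (k : ℕ) :
    2 ^ (k + 2) ∣ descFactorialPowSum a (2 ^ (k + 2) * t) - 2 ^ (k + 1) := by
  induction k with
  | zero =>
    obtain ⟨s, rfl⟩ := ht
    obtain ⟨c, hc⟩ := four_dvd_descFactorialPowSum_four_mul_sub ha (2 * s + 1)
    exact ⟨c + s, by push_cast at hc ⊢; linear_combination hc⟩
  | succ k ih =>
    set m := 2 ^ (k + 2) * t
    have hdm : (2 : ℤ) ^ (k + 3) ∣ 2 * m := ⟨t, by push_cast [m]; ring⟩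
    have hda : (2 : ℤ) ^ (k + 3) ∣ a ^ m - 1 := by
      have hm : m = 2 ^ (k + 1) * (2 * t) := by ring
      rw [hm, pow_mul]
      simpa using (Int.two_pow_add_three_dvd_pow_two_pow_sub_one ha k).trans
        (sub_one_dvd_pow_sub_one _ (2 * t))
    have hdouble := dvd_descFactorialPowSum_two_mul_sub ha ⟨2 ^ k * t, by ring⟩ hdm hda
    rw [show 2 ^ (k + 1 + 2) * t = 2 * m by ring]
    have hih : (2 : ℤ) ^ (k + 3) ∣ 2 * (descFactorialPowSum a m - 2 ^ (k + 1)) := by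
      rw [pow_succ']
      exact mul_dvd_mul_left 2 ih
    have hsplit : descFactorialPowSum a (2 * m) - 2 ^ (k + 1 + 1) =
        (descFactorialPowSum a (2 * m) - 2 * descFactorialPowSum a m)
          + 2 * (descFactorialPowSum a m - 2 ^ (k + 1)) := by
      ring
    rw [hsplit]
    exact dvd_add hdouble hih

theorem descFactorialPowSum_eq_pow_mul_sum_Ico (a : ℤ) (n : ℕ) :
    descFactorialPowSum a n =
      a ^ 3 * ∑ i ∈ Ico 3 n, (i.descFactorial 3 : ℤ) * a ^ (i - 3) := by
  rw [descFactorialPowSum, mul_sum, range_eq_Ico,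
    ← sum_subset (Ico_subset_Ico_left (Nat.zero_le 3))]
  · refine sum_congr rfl fun i hi => ?_
    rw [mul_left_comm, pow_mul_pow_sub a (mem_Ico.mp hi).1]
  · intro i hi hi'
    have hi3 : i < 3 := by simp only [mem_Ico] at hi hi'; omega
    rw [Nat.descFactorial_eq_zero_iff_lt.mpr hi3, Nat.cast_zero, zero_mul]

/-- If `n ≥ 1`, `4 ∣ n` and `α ^ n ≡ 1 (mod n)`, then
`∑_{i=3}^{n-1} i^(3̲) · α^(i-3) ≢ 0 (mod n)`, where `i^(3̲) = i(i-1)(i-2)`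
is the falling factorial. -/
theorem sum_descFactorial_three_mul_pow_not_modEq_zero
    (n : ℕ) (hn : 1 ≤ n) (h4 : 4 ∣ n) (α : ℤ) (hα : α ^ n ≡ 1 [ZMOD (n : ℤ)]) :
    ¬ ((∑ i ∈ Finset.Ico 3 n, (i.descFactorial 3 : ℤ) * α ^ (i - 3)) ≡ 0 [ZMOD (n : ℤ)]) := by
  intro hsum
  have hα_odd : Odd α := by
    have h2 : α ^ n ≡ 1 [ZMOD 2] := hα.of_dvd (by exact_mod_cast (dvd_trans (by norm_num) h4))
    exact (Int.odd_pow.mp (Int.odd_iff.mpr h2)).resolve_right (by omega)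
  obtain ⟨k, t, ht, rfl⟩ := Nat.exists_eq_two_pow_mul_odd (n := n) (by omega)
  obtain ⟨k, rfl⟩ : ∃ j, k = j + 2 := by
    have h4k : 2 ^ 2 ∣ 2 ^ k :=
      (Nat.Coprime.pow_left 2 (Nat.coprime_two_left.mpr ht)).dvd_of_dvd_mul_right h4
    exact ⟨k - 2, by have := (Nat.pow_dvd_pow_iff_le_right (by norm_num)).mp h4k; omega⟩
  have hS : (2 : ℤ) ^ (k + 2) ∣ descFactorialPowSum α (2 ^ (k + 2) * t) := by
    rw [descFactorialPowSum_eq_pow_mul_sum_Ico]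
    have h2n : (2 : ℤ) ^ (k + 2) ∣ ((2 ^ (k + 2) * t : ℕ) : ℤ) := ⟨t, by push_cast; ring⟩
    exact dvd_mul_of_dvd_right (h2n.trans (Int.modEq_zero_iff_dvd.mp hsum)) _
  have hcontra := dvd_sub hS (two_pow_dvd_descFactorialPowSum_sub hα_odd ht k)
  rw [sub_sub_cancel] at hcontra
  exact absurd ((pow_dvd_pow_iff two_ne_zero Int.prime_two.not_isUnit).mp hcontra) (by omega)
end

section
/- Let q be a prime, let k = q - 1, let n ≥ 1 be an integer with q ∣ n, and let α be an integer with α^n ≡ 1 (mod n) and α ≡ 1 (mod q). Then Σ_{i=k}^{n-1} i^(k̲) · α^(i-k) ≢ 0 (mod n). -/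
/-!
Write `q = k + 1`, `α = β + 1` (so `q ∣ β`) and `q ^ a ∥ n`. Expanding `(β + 1) ^ (i - k)` and
summing with the hockey-stick identity gives
`∑_{i=k}^{n-1} i^(k̲) α^(i-k) = k! ∑_m C(k+m, k) C(n, q+m) β^m`.
Since `k!` is prime to `q`, it suffices that `q ^ a` does not divide the right-hand sum. For `m ≥ 1`
the term is divisible by `q ^ a`: `n ∣ C(n, j) j` and `v_q(q + m) ≤ m ≤ v_q(β^m)`. The term `m = 0`
is `C(n, q)`, and `C(n, q) q = n C(n-1, q-1)` with `C(n-1, q-1) ≡ 1 (mod q)` by Lucas, so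
`v_q C(n, q) = a - 1`.
-/

open Finset Nat

namespace Nat

theorem choose_mul_choose_sub (i k m : ℕ) :
    i.choose k * (i - k).choose m = (k + m).choose k * i.choose (k + m) := by
  rw [mul_comm ((k + m).choose k), choose_mul (le_add_right k m), Nat.add_sub_cancel_left]

theorem sum_range_choose_eq_choose_succ (n r : ℕ) :
    ∑ i ∈ range n, i.choose r = n.choose (r + 1) := by
  induction n with
  | zero => simp
  | succ n ih => rw [sum_range_succ, ih, choose_succ_succ', add_comm]

theorem dvd_choose_mul_self (n j : ℕ) : n ∣ n.choose j * j := by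
  cases n with
  | zero => cases j <;> simp
  | succ n =>
    cases j with
    | zero => simp
    | succ j => exact Dvd.intro _ (add_one_mul_choose_eq n j)

theorem factorization_self_add_le (p : ℕ) {m : ℕ} (hm : m ≠ 0) :
    (p + m).factorization p ≤ m := by
  by_cases hp : p.Prime
  · have hle : p ^ (p + m).factorization p ≤ p + m := ordProj_le p (by omega)
    have hlt : p + m < p ^ (m + 1) :=
      calc p + m < (m + 1) * p := by nlinarith [hp.two_le, pos_of_ne_zero hm]
        _ ≤ p ^ m * p := Nat.mul_le_mul_right p (Nat.lt_pow_self hp.one_lt)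
        _ = p ^ (m + 1) := (pow_succ p m).symm
    exact Nat.lt_add_one_iff.mp ((Nat.pow_lt_pow_iff_right hp.one_lt).mp (hle.trans_lt hlt))
  · simp [factorization_eq_zero_of_not_prime _ hp]

theorem ordProj_dvd_choose_mul_ordProj {p : ℕ} (hp : p.Prime) (n : ℕ) {j : ℕ} (hj : j ≠ 0) :
    ordProj[p] n ∣ n.choose j * ordProj[p] j := by
  have h : ordProj[p] n ∣ n.choose j * ordProj[p] j * ordCompl[p] j := by
    rw [mul_assoc, ordProj_mul_ordCompl_eq_self]
    exact (ordProj_dvd n p).trans (dvd_choose_mul_self n j)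
  exact ((coprime_ordCompl hp hj).pow_left _).dvd_of_dvd_mul_right h

theorem ordProj_dvd_choose_add_mul_pow {p : ℕ} (hp : p.Prime) (n : ℕ) {m : ℕ} (hm : m ≠ 0) :
    ordProj[p] n ∣ n.choose (p + m) * p ^ m :=
  (ordProj_dvd_choose_mul_ordProj hp n (by omega)).trans
    (mul_dvd_mul_left _ (pow_dvd_pow p (factorization_self_add_le p hm)))

theorem choose_sub_one_sub_one_modEq_one {p n : ℕ} (hp : p.Prime) (hn : n ≠ 0) (hpn : p ∣ n) :
    (n - 1).choose (p - 1) ≡ 1 [MOD p] := by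
  have := Fact.mk hp
  have hp2 := hp.two_le
  obtain ⟨t, rfl⟩ := hpn
  obtain ⟨s, rfl⟩ := exists_eq_add_one_of_ne_zero (right_ne_zero_of_mul hn)
  have hsplit : p * (s + 1) - 1 = p - 1 + s * p := by
    rw [mul_add, mul_one, mul_comm]
    omega
  have hlucas := Choose.choose_modEq_choose_mod_mul_choose_div_nat (n := p - 1 + s * p)
    (k := p - 1) (p := p)
  rw [hsplit]
  rwa [add_mul_mod_self_right, mod_eq_of_lt (by omega : p - 1 < p),
    Nat.div_eq_of_lt (by omega : p - 1 < p), choose_self, choose_zero_right, mul_one] at hlucas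

theorem not_ordProj_dvd_choose_self {p n : ℕ} (hp : p.Prime) (hn : n ≠ 0) (hpn : p ∣ n) :
    ¬ ordProj[p] n ∣ n.choose p := by
  intro h
  have hmul : n * (n - 1).choose (p - 1) = n.choose p * p := by
    have := add_one_mul_choose_eq (n - 1) (p - 1)
    rwa [Nat.sub_add_cancel (by omega), Nat.sub_add_cancel hp.one_le] at this
  have hndvd : ¬ p ∣ (n - 1).choose (p - 1) :=
    ((choose_sub_one_sub_one_modEq_one hp hn hpn).dvd_iff dvd_rfl).not.mpr hp.not_dvd_one
  have hcop : Coprime (p ^ (n.factorization p + 1)) ((n - 1).choose (p - 1)) :=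
    (hp.coprime_iff_not_dvd.2 hndvd).pow_left _
  refine pow_succ_factorization_not_dvd hn hp (hcop.dvd_of_dvd_mul_right ?_)
  rw [hmul, pow_succ]
  exact mul_dvd_mul_right h p

end Nat

theorem add_one_pow_eq_sum_range {R : Type*} [CommSemiring R] (β : R) {j n : ℕ} (hj : j < n) :
    (β + 1) ^ j = ∑ m ∈ range n, (j.choose m : R) * β ^ m := by
  rw [add_pow, sum_subset (range_subset_range.2 hj)]
  · exact sum_congr rfl fun m _ => by rw [one_pow, mul_one, mul_comm]
  · intro m _ hm
    rw [choose_eq_zero_of_lt (by simpa using hm)]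
    simp

theorem sum_range_choose_mul_add_one_pow {R : Type*} [CommSemiring R] (k n : ℕ) (β : R) :
    ∑ i ∈ range n, (i.choose k : R) * (β + 1) ^ (i - k) =
      ∑ m ∈ range n, (((k + m).choose k * n.choose (k + m + 1) : ℕ) : R) * β ^ m := by
  calc ∑ i ∈ range n, (i.choose k : R) * (β + 1) ^ (i - k)
      = ∑ i ∈ range n, ∑ m ∈ range n,
          (((k + m).choose k * i.choose (k + m) : ℕ) : R) * β ^ m := by
        refine sum_congr rfl fun i hi => ?_
        rw [add_one_pow_eq_sum_range β ((Nat.sub_le i k).trans_lt (mem_range.1 hi)), mul_sum]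
        refine sum_congr rfl fun m _ => ?_
        rw [← choose_mul_choose_sub]
        push_cast
        ring
    _ = ∑ m ∈ range n, (((k + m).choose k * n.choose (k + m + 1) : ℕ) : R) * β ^ m := by
        rw [sum_comm]
        refine sum_congr rfl fun m _ => ?_
        rw [← sum_mul, ← Nat.cast_sum, ← mul_sum, sum_range_choose_eq_choose_succ]

theorem sum_Ico_descFactorial_mul_add_one_pow {R : Type*} [CommSemiring R] (k n : ℕ) (β : R) :
    ∑ i ∈ Ico k n, (i.descFactorial k : R) * (β + 1) ^ (i - k) =
      k ! * ∑ m ∈ range n, (((k + m).choose k * n.choose (k + m + 1) : ℕ) : R) * β ^ m := by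
  rw [← sum_range_choose_mul_add_one_pow, mul_sum, range_eq_Ico]
  refine sum_subset_zero_on_sdiff (Ico_subset_Ico_left (zero_le k)) ?_ ?_
  · intro i hi
    rw [choose_eq_zero_of_lt (by simp only [mem_sdiff, mem_Ico] at hi; omega)]
    simp
  · intro i _
    rw [descFactorial_eq_factorial_mul_choose]
    push_cast
    ring

theorem not_ordProj_dvd_sum_choose_mul_pow {k n : ℕ} (hp : (k + 1).Prime) (hn : n ≠ 0)
    (hpn : k + 1 ∣ n) {β : ℤ} (hβ : ((k + 1 : ℕ) : ℤ) ∣ β) :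
    ¬ ((ordProj[k + 1] n : ℕ) : ℤ) ∣
      ∑ m ∈ range n, (((k + m).choose k * n.choose (k + m + 1) : ℕ) : ℤ) * β ^ m := by
  obtain ⟨γ, rfl⟩ := hβ
  intro h
  rw [sum_eq_add_sum_sdiff_singleton_of_mem (mem_range.2 (pos_of_ne_zero hn))] at h
  have htail : ((ordProj[k + 1] n : ℕ) : ℤ) ∣ ∑ m ∈ range n \ {0},
      (((k + m).choose k * n.choose (k + m + 1) : ℕ) : ℤ) * ((k + 1 : ℕ) * γ) ^ m := by
    refine dvd_sum fun m hm => ?_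
    have hm0 : m ≠ 0 := by simpa using (mem_sdiff.1 hm).2
    have hdvd := Int.natCast_dvd_natCast.2 (ordProj_dvd_choose_add_mul_pow hp n hm0)
    refine hdvd.trans (Dvd.intro ((k + m).choose k * γ ^ m) ?_)
    rw [show k + m + 1 = k + 1 + m by omega, mul_pow]
    push_cast
    ring
  have hhead := (dvd_add_left htail).mp h
  simp only [add_zero, choose_self, one_mul, pow_zero, mul_one] at hhead
  exact not_ordProj_dvd_choose_self hp hn hpn (by exact_mod_cast hhead)

theorem sum_descFactorial_mul_pow_not_modEq_zero_of_prime_general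
    (q k n : ℕ) (hq : Nat.Prime q) (hk : k = q - 1) (hn : 1 ≤ n) (hqn : q ∣ n)
    (α : ℤ) (hα1 : α ≡ 1 [ZMOD (q : ℤ)]) :
    ¬ ((∑ i ∈ Finset.Ico k n, (i.descFactorial k : ℤ) * α ^ (i - k)) ≡ 0 [ZMOD (n : ℤ)]) := by
  intro h
  obtain rfl : q = k + 1 := by have := hq.two_le; omega
  have hS := Int.modEq_zero_iff_dvd.mp h
  rw [← sub_add_cancel α 1, sum_Ico_descFactorial_mul_add_one_pow] at hS
  have hcop : IsCoprime ((ordProj[k + 1] n : ℕ) : ℤ) (k ! : ℕ) :=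
    Nat.isCoprime_iff_coprime.2 ((hq.coprime_factorial_of_lt (lt_add_one k)).pow_left _)
  exact not_ordProj_dvd_sum_choose_mul_pow hq (by omega) hqn hα1.symm.dvd
    (hcop.dvd_of_dvd_mul_left ((Int.natCast_dvd_natCast.2 (ordProj_dvd n (k + 1))).trans hS))

/-- If `q` is prime, `k = q - 1`, `n ≥ 1` with `q ∣ n`, and `α ^ n ≡ 1 (mod n)`
with `α ≡ 1 (mod q)`, then `∑_{i=k}^{n-1} i^(k̲) · α^(i-k) ≢ 0 (mod n)`. -/
theorem sum_descFactorial_mul_pow_not_modEq_zero_of_prime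
    (q k n : ℕ) (hq : Nat.Prime q) (hk : k = q - 1) (hn : 1 ≤ n) (hqn : q ∣ n)
    (α : ℤ) (hα : α ^ n ≡ 1 [ZMOD (n : ℤ)]) (hα1 : α ≡ 1 [ZMOD (q : ℤ)]) :
    ¬ ((∑ i ∈ Finset.Ico k n, (i.descFactorial k : ℤ) * α ^ (i - k)) ≡ 0 [ZMOD (n : ℤ)]) :=
  sum_descFactorial_mul_pow_not_modEq_zero_of_prime_general q k n hq hk hn hqn α hα1
end

section
/- Let k ≥ 1 and n ≥ 1 be integers, let p be a prime, and let e ≥ 1 be such that k+1 = p^e. Then ν_p((n-1)^(k̲)) ≥ e - 1, and if ν_p((n-1)^(k̲)) = e - 1 then p ∣ n. -/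
namespace Nat

theorem dvd_descFactorial_of_le {d k : ℕ} (m : ℕ) (hd : 0 < d) (hdk : d ≤ k) :
    d ∣ m.descFactorial k :=
  (dvd_factorial hd hdk).trans (factorial_dvd_descFactorial m k)

/-- From `(m + 1) * C(m, k) = C(m + 1, k + 1) * (k + 1)`. -/
theorem dvd_choose_of_dvd_succ_of_coprime {d m k : ℕ} (hd : d ∣ k + 1)
    (hcop : d.Coprime (m + 1)) : d ∣ m.choose k :=
  hcop.dvd_of_dvd_mul_left <| by
    rw [add_one_mul_choose_eq]
    exact hd.mul_left _

theorem dvd_descFactorial_of_dvd_succ_of_coprime {d m k : ℕ} (hd : d ∣ k + 1)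
    (hcop : d.Coprime (m + 1)) : d ∣ m.descFactorial k := by
  rw [descFactorial_eq_factorial_mul_choose]
  exact (dvd_choose_of_dvd_succ_of_coprime hd hcop).mul_left _

end Nat

theorem emultiplicity_descFactorial_of_prime_pow_general
    (k n : ℕ) (hn : 1 ≤ n) (p : ℕ) (hp : Nat.Prime p)
    (e : ℕ) (he1 : 1 ≤ e) (he : k + 1 = p ^ e) :
    ((e - 1 : ℕ) : ℕ∞) ≤ emultiplicity p ((n - 1).descFactorial k) ∧
      (emultiplicity p ((n - 1).descFactorial k) = ((e - 1 : ℕ) : ℕ∞) → p ∣ n) := by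
  obtain ⟨m, rfl⟩ : ∃ m, n = m + 1 := ⟨n - 1, by omega⟩
  rw [Nat.add_sub_cancel]
  have hle : p ^ (e - 1) ≤ k := by
    have : p ^ (e - 1) < p ^ e := Nat.pow_lt_pow_right hp.one_lt (by omega)
    omega
  refine ⟨le_emultiplicity_of_pow_dvd
    (Nat.dvd_descFactorial_of_le m (pow_pos hp.pos _) hle), fun hv => ?_⟩
  by_contra hpm
  have hdvd : p ^ e ∣ m.descFactorial k :=
    Nat.dvd_descFactorial_of_dvd_succ_of_coprime he.symm.dvd
      ((hp.coprime_iff_not_dvd.2 hpm).pow_left e)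
  have : ((e : ℕ) : ℕ∞) ≤ ((e - 1 : ℕ) : ℕ∞) := hv ▸ le_emultiplicity_of_pow_dvd hdvd
  exact absurd (Nat.cast_le.1 this) (by omega)

/-- Lemma 2(b). Let `k ≥ 1`, `n ≥ 1`, let `p` be a prime and `e ≥ 1` with
`k+1 = p^e`. Then `ν_p((n-1)^(k̲)) ≥ e - 1`, and if `ν_p((n-1)^(k̲)) = e - 1`
then `p ∣ n`. Here the `p`-adic valuation (with convention `ν_p(0) = ∞`) is
formalised as `emultiplicity p`. -/
theorem emultiplicity_descFactorial_of_prime_pow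
    (k n : ℕ) (hk : 1 ≤ k) (hn : 1 ≤ n) (p : ℕ) (hp : Nat.Prime p)
    (e : ℕ) (he1 : 1 ≤ e) (he : k + 1 = p ^ e) :
    ((e - 1 : ℕ) : ℕ∞) ≤ emultiplicity p ((n - 1).descFactorial k) ∧
      (emultiplicity p ((n - 1).descFactorial k) = ((e - 1 : ℕ) : ℕ∞) → p ∣ n) :=
  emultiplicity_descFactorial_of_prime_pow_general k n hn p hp e he1 he
end

section
/- Let k ≥ 1 and n ≥ 1 be integers, and let p be a prime dividing k+1. Then ν_p((n-1)^(k̲)/(k+1)) < 0 if and only if k+1 ∈ {4, p} and (k+1) ∣ n; moreover in that case ν_p((n-1)^(k̲)/(k+1)) = -1. -/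
open Finset Nat

private lemma nat_mul_sub_one_div (a b : ℕ) (ha : 1 ≤ a) (hb : 1 ≤ b) :
    (a * b - 1) / a = b - 1 := by
  obtain ⟨b, rfl⟩ : ∃ b', b = b' + 1 := ⟨b - 1, by omega⟩
  have h1 : a * (b + 1) - 1 = (a - 1) + a * b := by
    have h : a * (b + 1) = a * b + a := by ring
    omega
  rw [h1, Nat.add_mul_div_left _ _ (by omega : 0 < a),
    Nat.div_eq_of_lt (by omega)]
  omega

private lemma geom_big (p : ℕ) (hp : 2 ≤ p) :
    ∀ ν, 3 ≤ ν → 2 * ν ≤ ∑ j ∈ Finset.range ν, p ^ j := by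
  intro ν hν
  induction ν with
  | zero => omega
  | succ ν ih =>
    rcases Nat.lt_or_ge ν 3 with h | h
    · interval_cases ν
      · omega
      · omega
      · -- ν = 2, sum over range 3
        simp only [Finset.sum_range_succ, Finset.sum_range_zero, pow_zero, pow_one]
        nlinarith
    · have h1 := ih (by omega)
      rw [Finset.sum_range_succ]
      have h2 : 1 < p ^ ν := Nat.one_lt_pow (by omega) (by omega)
      omega

private lemma two_mul_le_geom (p m ν : ℕ) (hp : 2 ≤ p) (hm : 1 ≤ m) (hν : 1 ≤ ν)
    (h1 : ¬(ν = 1 ∧ m = 1)) (h2 : ¬(p = 2 ∧ ν = 2 ∧ m = 1)) :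
    2 * ν ≤ m * ∑ j ∈ Finset.range ν, p ^ j := by
  have hG : ν ≤ ∑ j ∈ Finset.range ν, p ^ j := by
    calc ν = ∑ _j ∈ Finset.range ν, 1 := by simp
    _ ≤ ∑ j ∈ Finset.range ν, p ^ j :=
      Finset.sum_le_sum fun j _ => Nat.one_le_pow _ _ (by omega)
  rcases Nat.lt_or_ge m 2 with hm2 | hm2
  · -- m = 1
    have hm1 : m = 1 := by omega
    subst hm1
    rw [one_mul]
    have hν2 : 2 ≤ ν := by omega
    rcases Nat.lt_or_ge ν 3 with hν3 | hν3
    · -- ν = 2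
      have : ν = 2 := by omega
      subst this
      have hp3 : 3 ≤ p := by omega
      simp only [Finset.sum_range_succ, Finset.sum_range_zero, pow_zero, pow_one]
      omega
    · exact geom_big p hp ν hν3
  · calc 2 * ν ≤ 2 * ∑ j ∈ Finset.range ν, p ^ j := by omega
    _ ≤ m * ∑ j ∈ Finset.range ν, p ^ j := Nat.mul_le_mul_right _ hm2

/-- In the non-exceptional cases, `p ^ ν_p(k+1)` divides `k!`. -/
private lemma pow_padic_dvd_factorial (k p : ℕ) (hp : Nat.Prime p)
    (hpk : p ∣ (k + 1)) (h4 : k + 1 ≠ 4) (hkp : k + 1 ≠ p) :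
    p ^ padicValNat p (k + 1) ∣ k ! := by
  haveI := Fact.mk hp
  obtain ⟨ν, hνdef⟩ : ∃ v, v = padicValNat p (k + 1) := ⟨_, rfl⟩
  rw [← hνdef]
  have hk0 : k + 1 ≠ 0 := by omega
  have hpν : p ^ ν ∣ k + 1 := hνdef ▸ (padicValNat_dvd_iff_le hk0).mpr le_rfl
  obtain ⟨m, hm⟩ := hpν
  have hppos : 2 ≤ p := hp.two_le
  have hppow : 1 ≤ p ^ ν := Nat.one_le_pow _ _ (by omega)
  have hm1 : 1 ≤ m := by
    rcases Nat.eq_zero_or_pos m with h | h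
    · rw [h, mul_zero] at hm; omega
    · exact h
  have hpm : ¬ p ∣ m := by
    rintro ⟨c, hc⟩
    have hdvd : p ^ (ν + 1) ∣ k + 1 := ⟨c, by rw [hm, hc]; ring⟩
    have := (padicValNat_dvd_iff_le hk0).mp hdvd
    omega
  have hν1 : 1 ≤ ν := by
    have := one_le_padicValNat_of_dvd (p := p) (n := k + 1) (by omega) hpk
    omega
  -- each Legendre term for 1 ≤ i ≤ ν
  have hterm : ∀ i ∈ Finset.Ico 1 (ν + 1), k / p ^ i = p ^ (ν - i) * m - 1 := by
    intro i hi
    simp only [Finset.mem_Ico] at hi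
    have hpow : p ^ i * p ^ (ν - i) = p ^ ν := by
      rw [← pow_add]; congr 1; omega
    have hX : 1 ≤ p ^ (ν - i) * m :=
      Nat.one_le_iff_ne_zero.mpr (by positivity)
    have hk : k = p ^ i * (p ^ (ν - i) * m) - 1 := by
      rw [← mul_assoc, hpow]; omega
    rw [hk, nat_mul_sub_one_div _ _ (Nat.one_le_pow _ _ (by omega)) hX]
  -- Legendre's formula
  have hb : Nat.log p k < max (ν + 1) (Nat.log p k + 1) := by
    have := le_max_right (ν + 1) (Nat.log p k + 1); omega
  have hleg : padicValNat p (k !) =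
      ∑ i ∈ Finset.Ico 1 (max (ν + 1) (Nat.log p k + 1)), k / p ^ i :=
    padicValNat_factorial hb
  have hsub : ∑ i ∈ Finset.Ico 1 (ν + 1), k / p ^ i ≤
      ∑ i ∈ Finset.Ico 1 (max (ν + 1) (Nat.log p k + 1)), k / p ^ i :=
    Finset.sum_le_sum_of_subset
      (Finset.Ico_subset_Ico le_rfl (le_max_left _ _))
  -- the sum of full terms
  have hA : ∑ i ∈ Finset.Ico 1 (ν + 1), p ^ (ν - i) * m =
      m * ∑ j ∈ Finset.range ν, p ^ j := by
    rw [Finset.sum_Ico_eq_sum_range]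
    simp only [Nat.add_sub_cancel]
    have : ∀ i ∈ Finset.range ν, p ^ (ν - (1 + i)) * m = p ^ (ν - 1 - i) * m := by
      intro i hi; congr 2; omega
    rw [Finset.sum_congr rfl this, Finset.sum_range_reflect (fun j => p ^ j * m) ν]
    rw [← Finset.sum_mul, mul_comm]
  have hgeom : 2 * ν ≤ m * ∑ j ∈ Finset.range ν, p ^ j := by
    refine two_mul_le_geom p m ν hppos hm1 hν1 ?_ ?_
    · rintro ⟨rfl, rfl⟩
      rw [pow_one, mul_one] at hm
      exact hkp hm
    · rintro ⟨rfl, rfl, rfl⟩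
      norm_num at hm
      exact h4 hm
  have hsum2 : ∑ i ∈ Finset.Ico 1 (ν + 1), p ^ (ν - i) * m =
      (∑ i ∈ Finset.Ico 1 (ν + 1), (p ^ (ν - i) * m - 1)) + ν := by
    have hcard : (Finset.Ico 1 (ν + 1)).card = ν := by
      rw [Nat.card_Ico]; omega
    calc ∑ i ∈ Finset.Ico 1 (ν + 1), p ^ (ν - i) * m
        = ∑ i ∈ Finset.Ico 1 (ν + 1), ((p ^ (ν - i) * m - 1) + 1) := by
          refine Finset.sum_congr rfl fun i _ => ?_
          have : 1 ≤ p ^ (ν - i) * m := Nat.one_le_iff_ne_zero.mpr (by positivity)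
          omega
      _ = (∑ i ∈ Finset.Ico 1 (ν + 1), (p ^ (ν - i) * m - 1)) + ν := by
          rw [Finset.sum_add_distrib]
          simp [hcard]
  have hνle : ν ≤ padicValNat p (k !) := by
    rw [hleg]
    calc ν ≤ ∑ i ∈ Finset.Ico 1 (ν + 1), (p ^ (ν - i) * m - 1) := by
          rw [hA] at hsum2; omega
      _ = ∑ i ∈ Finset.Ico 1 (ν + 1), k / p ^ i :=
          (Finset.sum_congr rfl hterm).symm
      _ ≤ _ := hsub
  exact (padicValNat_dvd_iff_le (Nat.factorial_ne_zero k)).mpr hνle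

private lemma succ_dvd_descFactorial (k n : ℕ) (hn : 1 ≤ n) (h : ¬ (k + 1) ∣ n) :
    (k + 1) ∣ (n - 1).descFactorial k := by
  rw [Nat.descFactorial_eq_prod_range]
  have hr0 : n % (k + 1) ≠ 0 := fun h0 => h (Nat.dvd_of_mod_eq_zero h0)
  have hrk : n % (k + 1) < k + 1 := Nat.mod_lt _ (by omega)
  have hmod : n % (k + 1) ≤ n := Nat.mod_le _ _
  have hi : n % (k + 1) - 1 ∈ Finset.range k := by
    rw [Finset.mem_range]; omega
  refine dvd_trans ?_ (Finset.dvd_prod_of_mem (fun i => n - 1 - i) hi)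
  show (k + 1) ∣ n - 1 - (n % (k + 1) - 1)
  have hdm := Nat.div_add_mod n (k + 1)
  have heq : n - 1 - (n % (k + 1) - 1) = (k + 1) * (n / (k + 1)) := by omega
  rw [heq]
  exact Dvd.intro _ rfl

private lemma not_dvd_descFactorial_prime (p n : ℕ) (hp : Nat.Prime p)
    (hn : p ≤ n) (hdvd : p ∣ n) :
    ¬ p ∣ (n - 1).descFactorial (p - 1) := by
  rw [Nat.descFactorial_eq_prod_range]
  intro h
  obtain ⟨i, hi, hpi⟩ := (hp.prime.dvd_finset_prod_iff _).mp h
  rw [Finset.mem_range] at hi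
  have hp2 := hp.two_le
  have h1 : n - 1 - i = n - (i + 1) := by omega
  rw [h1] at hpi
  have h2 : p ∣ n - (n - (i + 1)) := Nat.dvd_sub hdvd hpi
  have h3 : n - (n - (i + 1)) = i + 1 := by omega
  rw [h3] at h2
  have := Nat.le_of_dvd (by omega) h2
  omega

private lemma padicValNat_descFactorial_four (n : ℕ) (hn : 4 ∣ n) (hn4 : 4 ≤ n) :
    padicValNat 2 ((n - 1).descFactorial 3) = 1 := by
  haveI : Fact (Nat.Prime 2) := ⟨Nat.prime_two⟩
  obtain ⟨t, rfl⟩ := hn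
  have ht : 1 ≤ t := by omega
  have hd : (4 * t - 1).descFactorial 3 =
      (4 * t - 3) * ((4 * t - 2) * (4 * t - 1)) := by
    simp only [Nat.descFactorial]
    have e1 : 4 * t - 1 - 1 = 4 * t - 2 := by omega
    have e2 : 4 * t - 1 - 2 = 4 * t - 3 := by omega
    have e0 : 4 * t - 1 - 0 = 4 * t - 1 := by omega
    rw [e1, e2, e0]
    ring
  set c := (4 * t - 3) * ((2 * t - 1) * (4 * t - 1)) with hc
  have hdc : (4 * t - 1).descFactorial 3 = 2 * c := by
    rw [hd, hc]
    have e : 4 * t - 2 = 2 * (2 * t - 1) := by omega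
    rw [e]; ring
  have hcodd : ¬ 2 ∣ c := by
    intro h
    rcases (Nat.prime_two.dvd_mul.mp h) with h | h
    · omega
    · rcases (Nat.prime_two.dvd_mul.mp h) with h | h <;> omega
  have hc0 : c ≠ 0 := fun h => hcodd (h ▸ dvd_zero 2)
  have hd0 : (4 * t - 1).descFactorial 3 ≠ 0 := by rw [hdc]; positivity
  have l1 : 1 ≤ padicValNat 2 ((4 * t - 1).descFactorial 3) := by
    refine (padicValNat_dvd_iff_le hd0).mp ?_
    rw [pow_one, hdc]
    exact Dvd.intro _ rfl
  have l2 : ¬ 2 ≤ padicValNat 2 ((4 * t - 1).descFactorial 3) := by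
    intro hl
    have h4 : 2 ^ 2 ∣ (4 * t - 1).descFactorial 3 :=
      (padicValNat_dvd_iff_le hd0).mpr hl
    rw [hdc] at h4
    obtain ⟨e, he⟩ := h4
    exact hcodd ⟨e, by omega⟩
  omega

/-- Lemma 2(c). Let `k ≥ 1`, `n ≥ 1` and let `p` be a prime dividing `k+1`. Then
`ν_p((n-1)^(k̲)/(k+1)) < 0` if and only if `k+1 ∈ {4, p}` and `(k+1) ∣ n`;
moreover in that case `ν_p((n-1)^(k̲)/(k+1)) = -1`. The valuation on rationals
is `padicValRat`.  (In the exceptional case the rational in question is nonzero,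
and when `(n-1)^(k̲) = 0` neither side of the equivalence holds, so the
convention `ν_p(0) = ∞` versus `padicValRat p 0 = 0` does not matter.) -/
theorem padicValRat_descFactorial_div_lt_zero_iff
    (k n : ℕ) (hk : 1 ≤ k) (hn : 1 ≤ n) (p : ℕ) (hp : Nat.Prime p)
    (hpk : p ∣ (k + 1)) :
    (padicValRat p (((n - 1).descFactorial k : ℚ) / (k + 1)) < 0 ↔
        (k + 1 = 4 ∨ k + 1 = p) ∧ (k + 1) ∣ n) ∧
      ((k + 1 = 4 ∨ k + 1 = p) ∧ (k + 1) ∣ n →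
        padicValRat p (((n - 1).descFactorial k : ℚ) / (k + 1)) = -1) := by
  haveI := Fact.mk hp
  by_cases hnk : n ≤ k
  · -- degenerate case: descFactorial is zero, neither side holds
    have hd0 : (n - 1).descFactorial k = 0 :=
      Nat.descFactorial_eq_zero_iff_lt.mpr (by omega)
    have hfalse : ¬ ((k + 1 = 4 ∨ k + 1 = p) ∧ (k + 1) ∣ n) := by
      rintro ⟨-, hdvd⟩
      have := Nat.le_of_dvd (by omega) hdvd
      omega
    rw [hd0]
    have hq : (((0 : ℕ) : ℚ)) / ((k : ℚ) + 1) = 0 := by norm_num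
    rw [hq, padicValRat.zero]
    exact ⟨⟨fun h => absurd h (lt_irrefl 0), fun h => absurd h hfalse⟩,
      fun h => absurd h hfalse⟩
  · -- main case : n ≥ k + 1
    push_neg at hnk
    have hd0 : (n - 1).descFactorial k ≠ 0 := by
      rw [Ne, Nat.descFactorial_eq_zero_iff_lt]; omega
    have hk10 : (k + 1 : ℕ) ≠ 0 := by omega
    have hval : padicValRat p (((n - 1).descFactorial k : ℚ) / (k + 1)) =
        (padicValNat p ((n - 1).descFactorial k) : ℤ) -
          (padicValNat p (k + 1) : ℤ) := by
      have hcast : ((k : ℚ) + 1) = (((k + 1 : ℕ) : ℚ)) := by push_cast; ring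
      rw [hcast, padicValRat.div (p := p)
        (by exact_mod_cast hd0) (by exact_mod_cast hk10),
        padicValRat.of_nat, padicValRat.of_nat]
    have hE : ((k + 1 = 4 ∨ k + 1 = p) ∧ (k + 1) ∣ n) →
        (padicValNat p ((n - 1).descFactorial k) : ℤ) -
          (padicValNat p (k + 1) : ℤ) = -1 := by
      rintro ⟨h4 | hkp, hdvd⟩
      · -- k + 1 = 4
        have hp2 : p = 2 := by
          rw [h4] at hpk
          have h1 := hp.two_le
          have h2 := Nat.le_of_dvd (by norm_num) hpk
          interval_cases p
          · rfl
          · omega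
          · exact absurd hp (by norm_num)
        subst hp2
        have hk3 : k = 3 := by omega
        subst hk3
        have hn4 : 4 ≤ n := Nat.le_of_dvd (by omega) hdvd
        rw [padicValNat_descFactorial_four n hdvd hn4]
        have : padicValNat 2 4 = 2 := by
          have := padicValNat.prime_pow (p := 2) 2
          norm_num at this ⊢
          exact this
        rw [show (3:ℕ) + 1 = 4 from rfl, this]
        norm_num
      · -- k + 1 = p
        have hkn : p ≤ n := Nat.le_of_dvd (by omega) (hkp ▸ hdvd)
        have hk' : k = p - 1 := by omega
        have hnd : ¬ p ∣ (n - 1).descFactorial k := by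
          rw [hk']
          exact not_dvd_descFactorial_prime p n hp hkn (hkp ▸ hdvd)
        rw [padicValNat.eq_zero_of_not_dvd hnd, hkp, padicValNat_self]
        norm_num
    have hG : ¬ ((k + 1 = 4 ∨ k + 1 = p) ∧ (k + 1) ∣ n) →
        (padicValNat p (k + 1) : ℤ) ≤
          (padicValNat p ((n - 1).descFactorial k) : ℤ) := by
      intro hnot
      have key : p ^ padicValNat p (k + 1) ∣ (n - 1).descFactorial k := by
        by_cases hC : (k + 1) ∣ n
        · have h4 : k + 1 ≠ 4 := fun h => hnot ⟨Or.inl h, hC⟩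
          have hkp : k + 1 ≠ p := fun h => hnot ⟨Or.inr h, hC⟩
          exact (pow_padic_dvd_factorial k p hp hpk h4 hkp).trans
            (Nat.factorial_dvd_descFactorial _ _)
        · have h1 : p ^ padicValNat p (k + 1) ∣ k + 1 :=
            (padicValNat_dvd_iff_le hk10).mpr le_rfl
          exact h1.trans (succ_dvd_descFactorial k n hn hC)
      exact_mod_cast (padicValNat_dvd_iff_le hd0).mp key
    have hE' : ((k + 1 = 4 ∨ k + 1 = p) ∧ (k + 1) ∣ n) →
        padicValRat p (((n - 1).descFactorial k : ℚ) / (k + 1)) = -1 := by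
      intro h; rw [hval]; exact hE h
    refine ⟨⟨fun hlt => ?_, fun h => by rw [hE' h]; norm_num⟩, hE'⟩
    by_contra hnot
    rw [hval] at hlt
    have := hG hnot
    omega
end

section
/- Let k ≥ 1 and n ≥ 1 be integers. If it is not the case that (k+1 = 4 and 4 ∣ n), and it is not the case that (k+1 is a prime p and p ∣ n), then the rational number (n-1)^(k̲)/(k+1) is an integer. -/
open Nat Finset

lemma aux_mul_dvd_factorial {a b : ℕ} (ha : 1 ≤ a) (hab : a < b) : a * b ∣ b ! := by
  have h1 : a ∣ (b - 1)! := Nat.dvd_factorial ha (by omega)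
  have h2 : b ! = b * (b - 1)! := by
    cases b with
    | zero => omega
    | succ b => simp [Nat.factorial_succ]
  rw [h2, mul_comm a b]
  exact mul_dvd_mul_left b h1

lemma composite_dvd_factorial_sub_one {m : ℕ} (hm : 2 ≤ m) (hnp : ¬ m.Prime)
    (h4 : m ≠ 4) : m ∣ (m - 1)! := by
  obtain ⟨a, hadvd, ha2, halt⟩ := Nat.exists_dvd_of_not_prime2 hm hnp
  obtain ⟨b, hab⟩ := hadvd
  have hb2 : 2 ≤ b := by nlinarith [hab]
  have hblt : b < m := by nlinarith [hab]
  rcases lt_trichotomy a b with h | h | h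
  · have : a * b ∣ b ! := aux_mul_dvd_factorial (by omega) h
    exact (dvd_of_eq hab).trans (this.trans (Nat.factorial_dvd_factorial (by omega)))
  · -- a = b, m = a^2, a ≥ 3 since m ≠ 4
    subst h
    have ha3 : 3 ≤ a := by
      rcases Nat.lt_or_ge a 3 with h' | h'
      · interval_cases a <;> omega
      · exact h'
    have h1 : a * (2 * a) ∣ (2 * a)! := aux_mul_dvd_factorial (by omega) (by omega)
    have h2 : a * a ∣ a * (2 * a) := ⟨2, by ring⟩
    have hle : 2 * a + 1 ≤ m := by nlinarith
    have h3 : (2 * a)! ∣ (m - 1)! := Nat.factorial_dvd_factorial (by omega)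
    exact (dvd_of_eq hab).trans ((h2.trans h1).trans h3)
  · have : b * a ∣ a ! := aux_mul_dvd_factorial (by omega) h
    have : a * b ∣ a ! := by rwa [mul_comm b a] at this
    exact (dvd_of_eq hab).trans (this.trans (Nat.factorial_dvd_factorial (by omega)))

/-- Corollary. Let `k ≥ 1` and `n ≥ 1`. If it is not the case that `k+1 = 4`
and `4 ∣ n`, and it is not the case that `k+1` is a prime dividing `n`, then
`(n-1)^(k̲)/(k+1)` is an integer, i.e. `k+1` divides the falling factorial
`(n-1)^(k̲)`. -/
theorem descFactorial_div_is_integer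
    (k n : ℕ) (hk : 1 ≤ k) (hn : 1 ≤ n)
    (h4 : ¬ (k + 1 = 4 ∧ 4 ∣ n))
    (hq : ¬ (Nat.Prime (k + 1) ∧ (k + 1) ∣ n)) :
    (k + 1) ∣ (n - 1).descFactorial k := by
  by_cases hdvd : (k + 1) ∣ n
  · -- k+1 is composite and ≠ 4, so (k+1) ∣ k! ∣ descFactorial
    have hnp : ¬ (k + 1).Prime := fun hp => hq ⟨hp, hdvd⟩
    have hne4 : k + 1 ≠ 4 := fun h => h4 ⟨h, h ▸ hdvd⟩
    have h1 : (k + 1) ∣ (k + 1 - 1)! :=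
      composite_dvd_factorial_sub_one (by omega) hnp hne4
    simp only [Nat.add_sub_cancel] at h1
    exact h1.trans (Nat.factorial_dvd_descFactorial _ _)
  · -- some factor n - j with 1 ≤ j ≤ k is divisible by k+1
    set j := n % (k + 1) with hj
    have hj1 : 1 ≤ j := by
      rcases Nat.eq_zero_or_pos j with h | h
      · exact absurd (Nat.dvd_of_mod_eq_zero h) hdvd
      · exact h
    have hjk : j ≤ k := by
      have := Nat.mod_lt n (show 0 < k + 1 by omega)
      omega
    have hdj : (k + 1) ∣ n - j := Nat.dvd_sub_mod n
    have hmem : j - 1 ∈ range k := mem_range.mpr (by omega)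
    have hfac : (n - 1 - (j - 1)) ∣ (n - 1).descFactorial k := by
      rw [Nat.descFactorial_eq_prod_range]
      exact Finset.dvd_prod_of_mem (fun i => n - 1 - i) hmem
    have heq : n - 1 - (j - 1) = n - j := by omega
    rw [heq] at hfac
    exact hdj.trans hfac
end

section
/- Let k ≥ 1 and n ≥ 1 be integers and let p be a prime. Then ν_p((n-1)^(k̲)/(k+1)) ≥ -1, and if (k+1) ∤ n then ν_p((n-1)^(k̲)/(k+1)) ≥ 0. -/
/-!
Write `a = ν_p(k + 1)`, so that `p ^ a ≤ k + 1`. Since `k!` divides `(n - 1)^(k̲)`, every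
`q ≤ k` divides it; as `p ≥ 2`, `p ^ (a - 1) ≤ k`, which gives the bound `-1`. If moreover
`k + 1 ∤ n`, then `p ^ a` divides `(n - 1)^(k̲)` as well: either `p ^ a ≤ k`, or `p ^ a = k + 1`
and one of the `k` consecutive factors `n - 1, …, n - k` is the multiple of `k + 1` among
`n, …, n - k`.
-/

namespace Nat

theorem dvd_descFactorial_of_le_s8 {q k : ℕ} (N : ℕ) (hq : 0 < q) (hqk : q ≤ k) :
    q ∣ N.descFactorial k :=
  (dvd_factorial hq hqk).trans (factorial_dvd_descFactorial N k)

theorem dvd_descFactorial_pred_of_not_dvd {q k n : ℕ} (hq : 0 < q) (hqk : q ≤ k + 1)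
    (hn : ¬q ∣ n) : q ∣ (n - 1).descFactorial k := by
  have hr : 0 < n % q := pos_of_ne_zero fun h ↦ hn (dvd_of_mod_eq_zero h)
  have hr_lt : n % q < q := mod_lt n hq
  have hmem : n % q - 1 ∈ Finset.range k := Finset.mem_range.mpr (by omega)
  have hfactor : n - 1 - (n % q - 1) = q * (n / q) := by
    have := mod_add_div n q
    omega
  rw [descFactorial_eq_prod_range]
  exact (hfactor ▸ dvd_mul_right q (n / q)).trans (Finset.dvd_prod_of_mem _ hmem)

theorem dvd_descFactorial_pred_of_dvd_succ {q k n : ℕ} (hq : q ∣ k + 1) (hn : ¬(k + 1) ∣ n) :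
    q ∣ (n - 1).descFactorial k := by
  have hqk : q ≤ k + 1 := le_of_dvd k.succ_pos hq
  rcases hqk.lt_or_eq with hlt | rfl
  · exact dvd_descFactorial_of_le_s8 _ (pos_of_dvd_of_pos hq k.succ_pos) (Nat.lt_succ_iff.mp hlt)
  · exact dvd_descFactorial_pred_of_not_dvd k.succ_pos le_rfl hn

theorem pow_padicValNat_succ_dvd_descFactorial_pred {p k n : ℕ} (hn : ¬(k + 1) ∣ n) :
    p ^ padicValNat p (k + 1) ∣ (n - 1).descFactorial k :=
  dvd_descFactorial_pred_of_dvd_succ pow_padicValNat_dvd hn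

theorem pow_pred_padicValNat_succ_dvd_descFactorial {p : ℕ} (hp : p.Prime) (k N : ℕ) :
    p ^ (padicValNat p (k + 1) - 1) ∣ N.descFactorial k := by
  set a := padicValNat p (k + 1)
  rcases eq_zero_or_pos a with ha | ha
  · simp [ha]
  have hpow : p * p ^ (a - 1) = p ^ a := by rw [← pow_succ']; congr; omega
  have hle : p ^ a ≤ k + 1 := le_of_dvd k.succ_pos pow_padicValNat_dvd
  have hpos : 0 < p ^ (a - 1) := pow_pos hp.pos _
  have htwo : 2 * p ^ (a - 1) ≤ p * p ^ (a - 1) := Nat.mul_le_mul_right _ hp.two_le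
  exact dvd_descFactorial_of_le_s8 N hpos (by omega)

end Nat

theorem padicValRat_descFactorial_div_ge_general
    (k n : ℕ) (p : ℕ) (hp : Nat.Prime p) :
    -1 ≤ padicValRat p (((n - 1).descFactorial k : ℚ) / (k + 1)) ∧
      (¬ ((k + 1) ∣ n) → 0 ≤ padicValRat p (((n - 1).descFactorial k : ℚ) / (k + 1))) := by
  have : Fact p.Prime := ⟨hp⟩
  set D := (n - 1).descFactorial k
  rcases eq_or_ne D 0 with hD | hD
  · simp [hD] -- `padicValRat p 0 = 0`
  have hval : padicValRat p ((D : ℚ) / (k + 1)) =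
      (padicValNat p D : ℤ) - padicValNat p (k + 1) := by
    rw [padicValRat.div (by exact_mod_cast hD) (by positivity), ← padicValRat.of_nat,
      ← padicValRat.of_nat]
    push_cast; rfl
  rw [hval]
  refine ⟨?_, fun hdvd ↦ ?_⟩
  · have := (padicValNat_dvd_iff_le hD).mp
      (Nat.pow_pred_padicValNat_succ_dvd_descFactorial hp k (n - 1))
    omega
  · have := (padicValNat_dvd_iff_le hD).mp
      (Nat.pow_padicValNat_succ_dvd_descFactorial_pred (p := p) hdvd)
    omega

/-- Corollary. Let `k ≥ 1`, `n ≥ 1` and let `p` be a prime. Then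
`ν_p((n-1)^(k̲)/(k+1)) ≥ -1`, and if `(k+1) ∤ n` then
`ν_p((n-1)^(k̲)/(k+1)) ≥ 0`.  The valuation on rationals is `padicValRat`.
(When `(n-1)^(k̲) = 0` the conventions `ν_p(0) = ∞` and `padicValRat p 0 = 0`
both make the inequalities hold.) -/
theorem padicValRat_descFactorial_div_ge
    (k n : ℕ) (hk : 1 ≤ k) (hn : 1 ≤ n) (p : ℕ) (hp : Nat.Prime p) :
    -1 ≤ padicValRat p (((n - 1).descFactorial k : ℚ) / (k + 1)) ∧
      (¬ ((k + 1) ∣ n) → 0 ≤ padicValRat p (((n - 1).descFactorial k : ℚ) / (k + 1))) :=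
  padicValRat_descFactorial_div_ge_general k n p hp
end

section
/- Let k ≥ 0 and n ≥ 1 be integers, let p be a prime dividing n, let ℓ = ν_p(n), and let α be an integer with α^n ≡ 1 (mod p^ℓ) and α ≢ 1 (mod p). Then Σ_{i=k}^{n-1} i^(k̲) · α^(i-k) ≡ 0 (mod p^ℓ). -/
lemma key_identity (α : ℤ) (m n : ℕ) :
    (α - 1) * (∑ i ∈ Finset.Ico (m+1) n, (i.descFactorial (m+1) : ℤ) * α ^ (i - (m+1)))
      + (m+1) * (∑ i ∈ Finset.Ico m n, (i.descFactorial m : ℤ) * α ^ (i - m))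
    = (n.descFactorial (m+1) : ℤ) * α ^ (n - (m+1)) := by
  induction n with
  | zero => simp
  | succ n ih =>
    rcases lt_trichotomy n m with h | rfl | h
    · have h1 : (n+1).descFactorial (m+1) = 0 :=
        Nat.descFactorial_eq_zero_iff_lt.mpr (by omega)
      rw [Finset.Ico_eq_empty (by omega), Finset.Ico_eq_empty (by omega), h1]
      simp
    · rw [Finset.Ico_self, Finset.sum_Ico_succ_top (le_refl n), Finset.Ico_self]
      simp only [Finset.sum_empty, Nat.descFactorial_self, Nat.sub_self, pow_zero,
        mul_zero, zero_add, mul_one]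
      push_cast [Nat.factorial_succ]
      ring
    · rw [Finset.sum_Ico_succ_top (by omega : m + 1 ≤ n),
        Finset.sum_Ico_succ_top (by omega : m ≤ n)]
      have e3 : (n+1).descFactorial (m+1) = (n+1) * n.descFactorial m :=
        Nat.succ_descFactorial_succ n m
      have e4 : n.descFactorial (m+1) = (n - m) * n.descFactorial m :=
        Nat.descFactorial_succ n m
      rw [e4] at ih ⊢
      rw [(by omega : n + 1 - (m + 1) = n - m), e3,
        (by omega : n - m = (n - (m+1)) + 1), pow_succ]
      have e5 : ((n - (m+1) : ℕ) : ℤ) = (n : ℤ) - m - 1 := by omega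
      have e6 : ((n - m : ℕ) : ℤ) = (n : ℤ) - m := by omega
      push_cast [e5, e6] at ih ⊢
      linear_combination ih


/-- Claim 1 in the proof of Theorem 1. Let `k ≥ 0`, `n ≥ 1`, let `p` be a
prime dividing `n`, let `ℓ = ν_p(n)`, and let `α ∈ ℤ` with
`α ^ n ≡ 1 (mod p^ℓ)` and `α ≢ 1 (mod p)`. Then
`∑_{i=k}^{n-1} i^(k̲) · α^(i-k) ≡ 0 (mod p^ℓ)`. -/
theorem sum_descFactorial_mul_pow_modEq_zero_of_not_modEq_one
    (k n : ℕ) (hn : 1 ≤ n) (p : ℕ) (hp : Nat.Prime p) (hpn : p ∣ n)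
    (ℓ : ℕ) (hℓ : ℓ = padicValNat p n) (α : ℤ)
    (hα : α ^ n ≡ 1 [ZMOD ((p : ℤ) ^ ℓ)]) (hα1 : ¬ (α ≡ 1 [ZMOD (p : ℤ)])) :
    (∑ i ∈ Finset.Ico k n, (i.descFactorial k : ℤ) * α ^ (i - k)) ≡ 0 [ZMOD ((p : ℤ) ^ ℓ)] := by
  have hp' : Prime (p : ℤ) := Nat.prime_iff_prime_int.mp hp
  have hcop : IsCoprime ((p : ℤ) ^ ℓ) (α - 1) := by
    apply IsCoprime.pow_left
    rw [Prime.coprime_iff_not_dvd hp']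
    intro hd
    exact hα1 (Int.modEq_iff_dvd.mpr (by simpa using hd.neg_right))
  have hpow : ((p : ℤ)) ^ ℓ ∣ (n : ℤ) := by
    have h : p ^ ℓ ∣ n := hℓ ▸ pow_padicValNat_dvd
    exact_mod_cast h
  rw [Int.modEq_zero_iff_dvd]
  induction k with
  | zero =>
    apply hcop.dvd_of_dvd_mul_left
    have h0 : (α - 1) * ∑ i ∈ Finset.Ico 0 n, ((i.descFactorial 0 : ℤ)) * α ^ (i - 0)
        = α ^ n - 1 := by
      simp only [Nat.descFactorial_zero, Nat.cast_one, one_mul, Nat.sub_zero]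
      rw [← Finset.range_eq_Ico, mul_comm]
      exact geom_sum_mul α n
    rw [h0]
    exact dvd_sub_comm.mp hα.dvd
  | succ m ih =>
    apply hcop.dvd_of_dvd_mul_left
    have hkey := key_identity α m n
    have h1 : (α - 1) * ∑ i ∈ Finset.Ico (m+1) n, (i.descFactorial (m+1) : ℤ) * α ^ (i - (m+1))
        = (n.descFactorial (m+1) : ℤ) * α ^ (n - (m+1))
          - (m+1) * ∑ i ∈ Finset.Ico m n, (i.descFactorial m : ℤ) * α ^ (i - m) := by
      linear_combination hkey
    rw [h1]
    apply dvd_sub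
    · refine dvd_mul_of_dvd_left (hpow.trans ?_) _
      have h2 : n ∣ n.descFactorial (m+1) := by
        obtain ⟨n', rfl⟩ : ∃ n', n = n' + 1 := ⟨n - 1, by omega⟩
        rw [Nat.succ_descFactorial_succ]
        exact dvd_mul_right _ _
      exact_mod_cast h2
    · exact Dvd.dvd.mul_left ih _
end

section
/- Let k ≥ 0 and n ≥ 1 be integers and let y be a rational number. Then Σ_{i=k}^{n-1} i^(k̲) · (1+y)^(i-k) = Σ_{j=0}^{n-1-k} (y^j / j!) · ((n-1)^(k̲+j̲)/(k+j+1)) · n, as an identity of rational numbers (both sides being 0 when n ≤ k). -/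
lemma sum_Ico_choose_aux (k m n : ℕ) (hk : k ≤ m) (hn : 1 ≤ n) :
    ∑ i ∈ Finset.Ico k n, i.choose m = n.choose (m + 1) := by
  have h1 : ∑ i ∈ Finset.Ico k n, i.choose m = ∑ i ∈ Finset.Icc m (n - 1), i.choose m := by
    rcases le_or_gt m (n - 1) with h | h
    · refine (Finset.sum_subset ?_ ?_).symm
      · intro x hx
        simp only [Finset.mem_Icc] at hx
        simp only [Finset.mem_Ico]
        omega
      · intro x hx hx2
        simp only [Finset.mem_Ico] at hx
        simp only [Finset.mem_Icc] at hx2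
        exact Nat.choose_eq_zero_of_lt (by omega)
    · rw [Finset.Icc_eq_empty (by omega), Finset.sum_empty]
      apply Finset.sum_eq_zero
      intro x hx
      simp only [Finset.mem_Ico] at hx
      exact Nat.choose_eq_zero_of_lt (by omega)
  rw [h1]
  have := Nat.sum_Icc_choose (n - 1) m
  rw [this]
  congr 1
  omega

/-- Equation (E4): for `k ≥ 0`, `n ≥ 1` and a rational `y`,
`∑_{i=k}^{n-1} i^(k̲) (1+y)^(i-k)
  = ∑_{j=0}^{n-1-k} (y^j/j!) · ((n-1)^(k+j̲)/(k+j+1)) · n`,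
as an identity of rational numbers (both sides are empty sums, hence `0`,
when `n ≤ k`). -/
theorem sum_descFactorial_mul_one_add_pow
    (k n : ℕ) (hn : 1 ≤ n) (y : ℚ) :
    (∑ i ∈ Finset.Ico k n, (i.descFactorial k : ℚ) * (1 + y) ^ (i - k)) =
      ∑ j ∈ Finset.range (n - k),
        y ^ j / (Nat.factorial j : ℚ) * (((n - 1).descFactorial (k + j) : ℚ) / (k + j + 1)) * n := by
  rcases le_or_gt n k with hnk | hkn
  · rw [Finset.Ico_eq_empty (by omega), Finset.sum_empty,
      Nat.sub_eq_zero_of_le hnk, Finset.range_zero, Finset.sum_empty]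
  have step1 : ∀ i ∈ Finset.Ico k n,
      (i.descFactorial k : ℚ) * (1 + y) ^ (i - k)
      = ∑ j ∈ Finset.range (n - k),
          (i.descFactorial k : ℚ) * (y ^ j * ((i - k).choose j : ℚ)) := by
    intro i hi
    simp only [Finset.mem_Ico] at hi
    rw [add_comm (1 : ℚ) y, add_pow]
    simp only [one_pow, mul_one]
    rw [Finset.mul_sum]
    have hik : i - k + 1 ≤ n - k := by omega
    refine Finset.sum_subset ?_ ?_
    · exact Finset.range_subset_range.mpr hik
    · intro j hj hj2
      simp only [Finset.mem_range] at hj hj2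
      rw [Nat.choose_eq_zero_of_lt (by omega)]
      simp
  rw [Finset.sum_congr rfl step1, Finset.sum_comm]
  refine Finset.sum_congr rfl ?_
  intro j hj
  simp only [Finset.mem_range] at hj
  have key : ∀ i ∈ Finset.Ico k n,
      (i.descFactorial k : ℚ) * (y ^ j * ((i - k).choose j : ℚ))
      = y ^ j / (Nat.factorial j : ℚ) * (i.descFactorial (k + j) : ℚ) := by
    intro i hi
    have h1 : (i - k).descFactorial j * i.descFactorial k = i.descFactorial (k + j) := by
      have := Nat.descFactorial_mul_descFactorial (k := k) (m := k + j) (n := i) (by omega)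
      simpa using this
    have h2 : (i - k).descFactorial j = j.factorial * (i - k).choose j :=
      Nat.descFactorial_eq_factorial_mul_choose _ _
    have h3 : ((i.descFactorial (k + j) : ℚ)) =
        (j.factorial : ℚ) * ((i - k).choose j : ℚ) * (i.descFactorial k : ℚ) := by
      rw [← h1, h2]; push_cast; ring
    rw [h3]
    have : (j.factorial : ℚ) ≠ 0 := by positivity
    field_simp
  rw [Finset.sum_congr rfl key, ← Finset.mul_sum]
  have hsum : ∑ i ∈ Finset.Ico k n, (i.descFactorial (k + j) : ℚ)
      = ((k + j).factorial : ℚ) * (n.choose (k + j + 1) : ℚ) := by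
    have : ∀ i ∈ Finset.Ico k n, (i.descFactorial (k + j) : ℚ)
        = ((k + j).factorial : ℚ) * (i.choose (k + j) : ℚ) := by
      intro i hi
      rw [Nat.descFactorial_eq_factorial_mul_choose]; push_cast; ring
    rw [Finset.sum_congr rfl this, ← Finset.mul_sum]
    congr 1
    rw [← Nat.cast_sum, sum_Ico_choose_aux k (k + j) n (by omega) hn]
  rw [hsum]
  have hfinal : ((k + j).factorial : ℚ) * (n.choose (k + j + 1) : ℚ)
      = ((n - 1).descFactorial (k + j) : ℚ) / (k + j + 1) * n := by
    have h4 : n * (n - 1).descFactorial (k + j) = n.descFactorial (k + j + 1) := by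
      have := Nat.succ_descFactorial_succ (n - 1) (k + j)
      rw [Nat.sub_add_cancel hn] at this
      omega
    have h5 : n.descFactorial (k + j + 1) = (k + j + 1).factorial * n.choose (k + j + 1) :=
      Nat.descFactorial_eq_factorial_mul_choose _ _
    have h6 : ((k + j + 1).factorial : ℚ) = ((k + j).factorial : ℚ) * (k + j + 1) := by
      rw [Nat.factorial_succ]; push_cast; ring
    have h7 : ((k + j + 1 : ℕ) : ℚ) ≠ 0 := by positivity
    have := congrArg (fun m : ℕ => (m : ℚ)) h4
    simp only [Nat.cast_mul] at this
    rw [h5] at this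
    push_cast at this ⊢
    field_simp
    nlinarith [this]
  rw [hfinal]
  ring
end
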